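/- arXiv:1312.3546 — 10 statements merged into one kernel-verified Lean document; each statement's English description precedes it below -/
import Mathlib

section
/- Non-Markov property (covariance form): if there exists j ∈ {1,…,N} with a_j ≠ 0 and H_j ≠ 1/2, then there exist real numbers 0 < s < t < u such that C(s,u)·C(t,t) ≠ C(s,t)·C(t,u). (For a centered Gaussian process this factorization identity characterizes the Markov property, so the mixed sub-fractional Brownian motion S^H(a) is not Markovian.) -/
open Real Finset

/-- The sub-fractional Brownian covariance. -/
noncomputable def subCov (H s t : ℝ) : ℝ :=
  s ^ (2 * H) + t ^ (2 * H) - (1 / 2) * ((s + t) ^ (2 * H) + |t - s| ^ (2 * H))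

/-- The mixed sub-fractional covariance `C(s,t) = Σ_i a_i² c_{H_i}(s,t)`. -/
noncomputable def mixedCov (N : ℕ) (a H : Fin N → ℝ) (s t : ℝ) : ℝ :=
  ∑ i, (a i) ^ 2 * subCov (H i) s t

/-!
Take `s = 1`, `t = 1 + e` and some `u > 1` with `C(1,u) ≠ 0`. In the Markov identity the only
factor that is not smooth at `e = 0` is `C(1,1+e)`, whose singular part is
`-(1/2) Σ a_i² e^{2H_i}`. Solving the identity for it shows that `Σ_{H_i ≠ 1/2} a_i² e^{2H_i}`
agrees for `e > 0` with a `C²` function. Its leading exponent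
`q = min {2H_i : a_i ≠ 0, H_i ≠ 1/2}` lies in `(0,1) ∪ (1,2)`, but a `C²` function vanishing at
`0` cannot behave like `c e^q` with `c ≠ 0` there: it is `O(e)`, which rules out `q < 1`, and if
`q > 1` its derivative vanishes at `0` and is `O(e)`, so by l'Hôpital it is `o(e^q)`.
-/

open Filter Topology

theorem tendsto_rpow_nhdsGT_zero {r : ℝ} (hr : 0 < r) :
    Tendsto (fun x : ℝ => x ^ r) (𝓝[>] 0) (𝓝 0) := by
  simpa [Real.zero_rpow hr.ne'] using
    (Real.continuousAt_rpow_const 0 r (Or.inr hr.le)).tendsto.mono_left nhdsWithin_le_nhds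

section RpowAsymptotics

variable {f : ℝ → ℝ} {q r c : ℝ}

theorem tendsto_div_rpow_of_lt (hf : Tendsto (fun e => f e / e ^ q) (𝓝[>] 0) (𝓝 c))
    (hrq : r < q) : Tendsto (fun e => f e / e ^ r) (𝓝[>] 0) (𝓝 0) := by
  have h := hf.mul (tendsto_rpow_nhdsGT_zero (sub_pos.2 hrq))
  rw [mul_zero] at h
  refine h.congr' ?_
  filter_upwards [self_mem_nhdsWithin] with e (he : 0 < e)
  rw [Real.rpow_sub he]
  field_simp

theorem HasDerivAt.tendsto_div_rpow_one (hf : HasDerivAt f c 0) (hf0 : f 0 = 0) :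
    Tendsto (fun e => f e / e ^ (1 : ℝ)) (𝓝[>] 0) (𝓝 c) := by
  refine ((hasDerivAt_iff_tendsto_slope.mp hf).mono_left
    (nhdsWithin_mono _ fun x (hx : 0 < x) => hx.ne')).congr fun e => ?_
  simp [slope_def_field, hf0]

theorem ContDiffAt.differentiableAt_deriv {x : ℝ} (hf : ContDiffAt ℝ 2 f x) :
    DifferentiableAt ℝ (deriv f) x :=
  ((hf.fderiv_right_succ (n := 1)).differentiableAt one_ne_zero).clm_apply
    (differentiableAt_const 1)

theorem eq_one_of_contDiffAt_of_tendsto_div_rpow (hf : ContDiffAt ℝ 2 f 0) (hq0 : 0 < q)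
    (hq2 : q < 2) (hc : c ≠ 0) (hlim : Tendsto (fun e => f e / e ^ q) (𝓝[>] 0) (𝓝 c)) :
    q = 1 := by
  by_contra hq1
  have hf0 : f 0 = 0 := by
    have h := tendsto_div_rpow_of_lt hlim hq0
    simp only [Real.rpow_zero, div_one] at h
    exact tendsto_nhds_unique (hf.continuousAt.tendsto.mono_left nhdsWithin_le_nhds) h
  have hdf : HasDerivAt f (deriv f 0) 0 := (hf.differentiableAt (by norm_num)).hasDerivAt
  refine hc (tendsto_nhds_unique hlim ?_)
  rcases lt_or_gt_of_ne hq1 with hq1 | hq1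
  · exact tendsto_div_rpow_of_lt (hdf.tendsto_div_rpow_one hf0) hq1
  · have hf'0 : deriv f 0 = 0 :=
      tendsto_nhds_unique (hdf.tendsto_div_rpow_one hf0) (tendsto_div_rpow_of_lt hlim hq1)
    have hf' : Tendsto (fun e => deriv f e / e ^ (q - 1)) (𝓝[>] 0) (𝓝 0) :=
      tendsto_div_rpow_of_lt (hf.differentiableAt_deriv.hasDerivAt.tendsto_div_rpow_one hf'0)
        (by linarith)
    refine HasDerivAt.lhopital_zero_nhdsGT (f' := deriv f) (g' := fun e => q * e ^ (q - 1))
      ?_ ?_ ?_ ?_ ?_ ?_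
    · filter_upwards [(hf.eventually (by simp)).filter_mono nhdsWithin_le_nhds] with e he
      exact (he.differentiableAt (by norm_num)).hasDerivAt
    · filter_upwards [self_mem_nhdsWithin] with e (he : 0 < e)
      exact Real.hasDerivAt_rpow_const (Or.inl he.ne')
    · filter_upwards [self_mem_nhdsWithin] with e (he : 0 < e)
      positivity
    · simpa [hf0] using hf.continuousAt.tendsto.mono_left nhdsWithin_le_nhds
    · exact tendsto_rpow_nhdsGT_zero hq0
    · simpa [div_mul_eq_div_div_swap] using hf'.div_const q

end RpowAsymptotics

theorem tendsto_sum_mul_rpow_div_rpow {ι : Type*} (s : Finset ι) (c p : ι → ℝ) {q : ℝ}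
    (hq : ∀ i ∈ s, c i ≠ 0 → q ≤ p i) :
    Tendsto (fun e => (∑ i ∈ s, c i * e ^ p i) / e ^ q) (𝓝[>] 0)
      (𝓝 (∑ i ∈ s with p i = q, c i)) := by
  rw [Finset.sum_filter]
  have hterm : ∀ i ∈ s, Tendsto (fun e : ℝ => c i * e ^ (p i - q)) (𝓝[>] 0)
      (𝓝 (if p i = q then c i else 0)) := by
    intro i hi
    split_ifs with hpq
    · simp [hpq]
    · rcases eq_or_ne (c i) 0 with hc | hc
      · simp [hc]
      · simpa using (tendsto_rpow_nhdsGT_zero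
          (sub_pos.2 ((hq i hi hc).lt_of_ne' hpq))).const_mul (c i)
  refine (tendsto_finsetSum s hterm).congr' ?_
  filter_upwards [self_mem_nhdsWithin] with e (he : 0 < e)
  simp only [Finset.sum_div, Real.rpow_sub he, mul_div_assoc]

theorem subCov_comm (H s t : ℝ) : subCov H s t = subCov H t s := by
  simp only [subCov, add_comm s t, abs_sub_comm t s]
  ring

theorem subCov_self {H t : ℝ} (hH : 0 < H) (ht : 0 ≤ t) :
    subCov H t t = (2 - 2 ^ (2 * H - 1)) * t ^ (2 * H) := by
  rw [subCov, sub_self, abs_zero, Real.zero_rpow (by positivity), ← two_mul t,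
    Real.mul_rpow zero_le_two ht, Real.rpow_sub two_pos, Real.rpow_one]
  ring

section MixedCov

variable {N : ℕ} {a H : Fin N → ℝ}

theorem mixedCov_comm (s t : ℝ) : mixedCov N a H s t = mixedCov N a H t s := by
  simp only [mixedCov, subCov_comm _ s t]

theorem mixedCov_self_pos (hH : ∀ i, H i ∈ Set.Ioo 0 1) {j : Fin N} (haj : a j ≠ 0) {t : ℝ}
    (ht : 0 < t) : 0 < mixedCov N a H t t := by
  have hcoef : ∀ i, 0 < 2 - (2 : ℝ) ^ (2 * H i - 1) := fun i => by
    have := Real.rpow_lt_rpow_of_exponent_lt one_lt_two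
      (show 2 * H i - 1 < 1 by linarith [(hH i).2])
    rw [Real.rpow_one] at this
    linarith
  simp only [mixedCov, subCov_self (hH _).1 ht.le]
  exact Finset.sum_pos'
    (fun i _ => mul_nonneg (sq_nonneg _) (mul_pos (hcoef i) (by positivity)).le)
    ⟨j, mem_univ j, mul_pos (by positivity) (mul_pos (hcoef j) (by positivity))⟩

theorem continuous_mixedCov (hH : ∀ i, 0 ≤ H i) (s : ℝ) : Continuous (mixedCov N a H s) := by
  have hp : ∀ i, 0 ≤ 2 * H i := fun i => by linarith [hH i]
  refine continuous_finsetSum _ fun i _ => continuous_const.mul ?_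
  exact (continuous_const.add (continuous_id.rpow_const fun _ => Or.inr (hp i))).sub
    (continuous_const.mul
      (((continuous_const.add continuous_id).rpow_const fun _ => Or.inr (hp i)).add
        ((continuous_id.sub continuous_const).abs.rpow_const fun _ => Or.inr (hp i))))

variable {n : ℕ∞}

theorem contDiffAt_mixedCov_of_ne {s t : ℝ} (hs : 0 < s) (ht : 0 < t) (hst : s ≠ t) :
    ContDiffAt ℝ n (mixedCov N a H s) t := by
  refine ContDiffAt.sum fun i _ => contDiffAt_const.mul ?_
  refine (contDiffAt_const.add (contDiffAt_id.rpow_const_of_ne ht.ne')).sub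
    (contDiffAt_const.mul ((contDiffAt_const.add contDiffAt_id).rpow_const_of_ne
      (add_pos hs ht).ne' |>.add (((contDiffAt_abs (sub_ne_zero.2 hst.symm)).comp t
        (contDiffAt_id.sub contDiffAt_const)).rpow_const_of_ne ?_)))
  simpa using sub_ne_zero.2 hst.symm

theorem contDiffAt_mixedCov_self {t₀ : ℝ} (ht₀ : 0 < t₀) :
    ContDiffAt ℝ n (fun t => mixedCov N a H t t) t₀ := by
  simp only [mixedCov, subCov, sub_self, abs_zero]
  refine ContDiffAt.sum fun i _ => contDiffAt_const.mul ?_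
  have hpow : ContDiffAt ℝ n (fun t : ℝ => t ^ (2 * H i)) t₀ :=
    contDiffAt_id.rpow_const_of_ne ht₀.ne'
  exact (hpow.add hpow).sub
    (contDiffAt_const.mul (((contDiffAt_id.add contDiffAt_id).rpow_const_of_ne
      (add_pos ht₀ ht₀).ne').add contDiffAt_const))

theorem contDiffAt_mixedCov_add_sum_abs_rpow {s t₀ : ℝ} (hs : 0 < s) (ht₀ : 0 < t₀) :
    ContDiffAt ℝ n
      (fun t => mixedCov N a H s t + (∑ i, a i ^ 2 * |t - s| ^ (2 * H i)) / 2) t₀ := by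
  have heq : (fun t => mixedCov N a H s t + (∑ i, a i ^ 2 * |t - s| ^ (2 * H i)) / 2) =
      fun t => ∑ i, a i ^ 2 * (s ^ (2 * H i) + t ^ (2 * H i) - (s + t) ^ (2 * H i) / 2) := by
    ext t
    simp only [mixedCov, subCov, Finset.sum_div, ← Finset.sum_add_distrib]
    exact Finset.sum_congr rfl fun i _ => by ring
  rw [heq]
  refine ContDiffAt.sum fun i _ => contDiffAt_const.mul ?_
  exact (contDiffAt_const.add (contDiffAt_id.rpow_const_of_ne ht₀.ne')).sub
    (((contDiffAt_const.add contDiffAt_id).rpow_const_of_ne (add_pos hs ht₀).ne').div_const _)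

theorem exists_contDiffAt_eq_sum_rpow_of_markov {s u : ℝ} (hs : 0 < s) (hsu : s < u)
    (hCsu : mixedCov N a H s u ≠ 0)
    (hM : ∀ t, s < t → t < u →
      mixedCov N a H s u * mixedCov N a H t t = mixedCov N a H s t * mixedCov N a H t u) :
    ∃ G : ℝ → ℝ, ContDiffAt ℝ 2 G 0 ∧
      ∀ᶠ e in 𝓝[>] 0, ∑ i, a i ^ 2 * e ^ (2 * H i) = G e := by
  set R := fun e => mixedCov N a H s (s + e) + (∑ i, a i ^ 2 * |s + e - s| ^ (2 * H i)) / 2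
  set V := fun e => mixedCov N a H (s + e) (s + e)
  set W := fun e => mixedCov N a H u (s + e)
  have hshift : ContDiffAt ℝ 2 (fun e : ℝ => s + e) 0 := contDiffAt_const.add contDiffAt_id
  have hR : ContDiffAt ℝ 2 R 0 :=
    (contDiffAt_mixedCov_add_sum_abs_rpow (t₀ := s + 0) hs (by simpa)).comp 0 hshift
  have hV : ContDiffAt ℝ 2 V 0 :=
    (contDiffAt_mixedCov_self (t₀ := s + 0) (by simpa)).comp 0 hshift
  have hW : ContDiffAt ℝ 2 W 0 :=
    (contDiffAt_mixedCov_of_ne (t := s + 0) (hs.trans hsu) (by simpa) (by simpa using hsu.ne')).comp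
      0 hshift
  have hW0 : W 0 ≠ 0 := by simpa [W, mixedCov_comm u s] using hCsu
  -- For `e > 0`, `C(s,s+e) = R e - (∑ i, a i ^ 2 * e ^ (2 * H i)) / 2`: solve the identity for it.
  refine ⟨fun e => 2 * R e - 2 * mixedCov N a H s u * V e / W e,
    (contDiffAt_const.mul hR).sub ((contDiffAt_const.mul hV).div hW hW0), ?_⟩
  filter_upwards [Ioo_mem_nhdsGT (sub_pos.2 hsu),
    (hW.continuousAt.eventually_ne hW0).filter_mono nhdsWithin_le_nhds] with e ⟨he0, heu⟩ hWe
  have hMe := hM (s + e) (by linarith) (by linarith)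
  rw [mixedCov_comm (s + e) u] at hMe
  simp only [R, V, W, add_sub_cancel_left, abs_of_pos he0] at hWe ⊢
  rw [mul_assoc, hMe, mul_div_assoc, mul_div_cancel_right₀ _ hWe]
  ring

theorem exists_tendsto_sum_rpow_sub_linear_div_rpow (hH : ∀ i, H i ∈ Set.Ioo 0 1) {j : Fin N}
    (haj : a j ≠ 0) (hHj : H j ≠ 1 / 2) :
    ∃ q c : ℝ, 0 < q ∧ q < 2 ∧ q ≠ 1 ∧ c ≠ 0 ∧
      Tendsto (fun e => (∑ i, a i ^ 2 * e ^ (2 * H i) - (∑ i with H i = 1 / 2, a i ^ 2) * e)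
        / e ^ q) (𝓝[>] 0) (𝓝 c) := by
  set T := univ.filter fun i => H i ≠ 1 / 2
  have hT : (T.filter fun i => a i ≠ 0).Nonempty :=
    ⟨j, Finset.mem_filter.2 ⟨Finset.mem_filter.2 ⟨Finset.mem_univ j, hHj⟩, haj⟩⟩
  obtain ⟨i₀, hi₀, hmin⟩ := (T.filter fun i => a i ≠ 0).exists_min_image H hT
  obtain ⟨hi₀T, hai₀⟩ := Finset.mem_filter.1 hi₀
  have hHi₀ : H i₀ ≠ 1 / 2 := (Finset.mem_filter.1 hi₀T).2
  have hlim := tendsto_sum_mul_rpow_div_rpow T (fun i => a i ^ 2) (fun i => 2 * H i)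
    (q := 2 * H i₀) fun i hi hai => by
      linarith [hmin i (Finset.mem_filter.2 ⟨hi, fun h => hai (by simp [h])⟩)]
  have hc : 0 < ∑ i ∈ T with 2 * H i = 2 * H i₀, a i ^ 2 :=
    Finset.sum_pos' (fun i _ => sq_nonneg (a i))
      ⟨i₀, Finset.mem_filter.2 ⟨hi₀T, rfl⟩, by positivity⟩
  refine ⟨2 * H i₀, _, by linarith [(hH i₀).1], by linarith [(hH i₀).2],
    fun h => hHi₀ (by linarith), hc.ne', hlim.congr fun e => ?_⟩
  have hsplit := Finset.sum_filter_add_sum_filter_not univ (fun i => H i = 1 / 2)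
    fun i => a i ^ 2 * e ^ (2 * H i)
  have hlinear : ∑ i with H i = 1 / 2, a i ^ 2 * e ^ (2 * H i) =
      (∑ i with H i = 1 / 2, a i ^ 2) * e := by
    rw [Finset.sum_mul]
    refine Finset.sum_congr rfl fun i hi => ?_
    rw [(Finset.mem_filter.mp hi).2]
    norm_num
  rw [← hsplit, hlinear, add_sub_cancel_left]

end MixedCov

/-- Non-Markov property (covariance form): if some `a_j ≠ 0` with `H_j ≠ 1/2`, then the
Gaussian Markov factorization `C(s,u) C(t,t) = C(s,t) C(t,u)` fails for some `0 < s < t < u`. -/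
theorem msfbm_not_markov (N : ℕ) (a H : Fin N → ℝ)
    (hH : ∀ i, H i ∈ Set.Ioo (0 : ℝ) 1)
    (j : Fin N) (haj : a j ≠ 0) (hHj : H j ≠ 1 / 2) :
    ∃ s t u : ℝ, 0 < s ∧ s < t ∧ t < u ∧
      mixedCov N a H s u * mixedCov N a H t t ≠
        mixedCov N a H s t * mixedCov N a H t u := by
  by_contra! hM
  obtain ⟨u, hu, hCu⟩ : ∃ u, 1 < u ∧ mixedCov N a H 1 u ≠ 0 := by
    have hne := (continuous_mixedCov (fun i => (hH i).1.le) 1).continuousAt.eventually_ne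
      (mixedCov_self_pos hH haj one_pos).ne'
    obtain ⟨u, hu, hu1⟩ := ((hne.filter_mono nhdsWithin_le_nhds).and
      (self_mem_nhdsWithin (s := Set.Ioi (1 : ℝ)))).exists
    exact ⟨u, hu1, hu⟩
  obtain ⟨G, hG, hGS⟩ := exists_contDiffAt_eq_sum_rpow_of_markov one_pos hu hCu
    fun t h1t htu => hM 1 t u one_pos h1t htu
  obtain ⟨q, c, hq0, hq2, hq1, hc, hlim⟩ :=
    exists_tendsto_sum_rpow_sub_linear_div_rpow hH haj hHj
  refine hq1 (eq_one_of_contDiffAt_of_tendsto_div_rpow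
    (f := fun e => G e - (∑ i with H i = 1 / 2, a i ^ 2) * e)
    (hG.sub (contDiffAt_const.mul contDiffAt_id)) hq0 hq2 hc (hlim.congr' ?_))
  filter_upwards [hGS] with e he
  rw [he]
end

section
/- For all real numbers s, t with 0 ≤ s ≤ t, the increment variance of the mixed sub-fractional Brownian motion satisfies the two-sided bound Σ_{i=1}^N a_i² γ_i (t−s)^{2H_i} ≤ f(s,t) ≤ Σ_{i=1}^N a_i² ν_i (t−s)^{2H_i}, where γ_i = 2 − 2^{2H_i−1} if H_i > 1/2 and γ_i = 1 if H_i ≤ 1/2, and ν_i = 1 if H_i > 1/2 and ν_i = 2 − 2^{2H_i−1} if H_i ≤ 1/2. -/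
open Real Finset

/-- The increment variance `f(s,t) = C(t,t) + C(s,s) − 2 C(s,t)`. -/
noncomputable def incVar (N : ℕ) (a H : Fin N → ℝ) (s t : ℝ) : ℝ :=
  mixedCov N a H t t + mixedCov N a H s s - 2 * mixedCov N a H s t

/-- `γ_i = 2 − 2^{2H_i−1}` if `H_i > 1/2`, and `γ_i = 1` if `H_i ≤ 1/2`. -/
noncomputable def gam (h : ℝ) : ℝ := if 1 / 2 < h then 2 - (2 : ℝ) ^ (2 * h - 1) else 1

/-- `ν_i = 1` if `H_i > 1/2`, and `ν_i = 2 − 2^{2H_i−1}` if `H_i ≤ 1/2`. -/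
noncomputable def nu (h : ℝ) : ℝ := if 1 / 2 < h then 1 else 2 - (2 : ℝ) ^ (2 * h - 1)

lemma convexOn_rpow_of_nonpos {p : ℝ} (hp : p ≤ 0) : ConvexOn ℝ (Set.Ioi 0) fun x : ℝ ↦ x ^ p := by
  have hlog : ConvexOn ℝ (Set.Ioi 0) fun x : ℝ ↦ log x * p :=
    (strictConcaveOn_log_Ioi.concaveOn.smul (neg_nonneg.2 hp)).neg.congr fun x _ ↦ by
      simp only [Pi.neg_apply, smul_eq_mul]; ring
  have himage : Convex ℝ ((fun x : ℝ ↦ log x * p) '' Set.Ioi 0) :=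
    (isPreconnected_Ioi.image _ ((continuousOn_log.mono fun _ hx ↦ ne_of_gt hx).mul
      continuousOn_const)).convex
  exact ((convexOn_exp.subset (Set.subset_univ _) himage).comp hlog
    (Real.exp_monotone.monotoneOn _)).congr fun x hx ↦ (rpow_def_of_pos hx p).symm

def symmSecondDiff (g : ℝ → ℝ) (u w : ℝ) : ℝ :=
  g (w + u) + g (w - u) - 2 * g w

section SymmSecondDiff

variable {g g' : ℝ → ℝ} {s : Set ℝ} {u w : ℝ}

lemma symmSecondDiff_neg (u w : ℝ) : symmSecondDiff (-g) u w = -symmSecondDiff g u w := by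
  simp only [symmSecondDiff, Pi.neg_apply]; ring

lemma ConvexOn.symmSecondDiff_nonneg (hg : ConvexOn ℝ s g) (hminus : w - u ∈ s)
    (hplus : w + u ∈ s) : 0 ≤ symmSecondDiff g u w := by
  have h := hg.2 hminus hplus (by norm_num : (0 : ℝ) ≤ 1 / 2) (by norm_num : (0 : ℝ) ≤ 1 / 2)
    (by norm_num)
  simp only [smul_eq_mul, show 1 / 2 * (w - u) + 1 / 2 * (w + u) = w by ring] at h
  simp only [symmSecondDiff]
  linarith

lemma ConcaveOn.symmSecondDiff_nonpos (hg : ConcaveOn ℝ s g) (hminus : w - u ∈ s)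
    (hplus : w + u ∈ s) : symmSecondDiff g u w ≤ 0 := by
  simpa only [symmSecondDiff_neg, neg_nonneg] using hg.neg.symmSecondDiff_nonneg hminus hplus

/-- The `w`-derivative of `symmSecondDiff g u w` is `symmSecondDiff g' u w ≤ 0`. -/
theorem antitoneOn_symmSecondDiff (hu : 0 ≤ u) (hg : ContinuousOn g (Set.Ici 0))
    (hderiv : ∀ x, 0 < x → HasDerivAt g (g' x) x) (hg' : ConcaveOn ℝ (Set.Ioi 0) g') :
    AntitoneOn (symmSecondDiff g u) (Set.Ici u) := by
  refine antitoneOn_of_hasDerivWithinAt_nonpos (f' := symmSecondDiff g' u) (convex_Ici u)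
    ?_ (fun w hw ↦ ?_) (fun w hw ↦ ?_)
  · have hshift : ∀ c, -u ≤ c → ContinuousOn (fun w ↦ g (w + c)) (Set.Ici u) := fun c hc ↦
      hg.comp (continuousOn_id.add continuousOn_const) fun w (hw : u ≤ w) ↦
        show (0 : ℝ) ≤ w + c by linarith
    have hminus : ContinuousOn (fun w ↦ g (w - u)) (Set.Ici u) := by
      simpa only [← sub_eq_add_neg] using hshift (-u) le_rfl
    have hid : ContinuousOn g (Set.Ici u) := by simpa using hshift 0 (by linarith)
    exact ((hshift u (by linarith)).add hminus).sub (continuousOn_const.mul hid)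
  all_goals
    rw [interior_Ici] at hw
    have hw : u < w := hw
  · exact ((((hderiv _ (by linarith)).comp_add_const w u).add
      ((hderiv _ (by linarith)).comp_sub_const w u)).sub
      ((hderiv w (by linarith)).const_mul 2)).hasDerivWithinAt
  · exact hg'.symmSecondDiff_nonpos (show (0 : ℝ) < w - u by linarith)
      (show (0 : ℝ) < w + u by linarith)

theorem monotoneOn_symmSecondDiff (hu : 0 ≤ u) (hg : ContinuousOn g (Set.Ici 0))
    (hderiv : ∀ x, 0 < x → HasDerivAt g (g' x) x) (hg' : ConvexOn ℝ (Set.Ioi 0) g') :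
    MonotoneOn (symmSecondDiff g u) (Set.Ici u) := by
  intro v hv w hw hvw
  have := antitoneOn_symmSecondDiff hu hg.neg (fun x hx ↦ (hderiv x hx).neg) hg'.neg hv hw hvw
  simp only [symmSecondDiff_neg] at this
  linarith

end SymmSecondDiff

section Rpow

variable {α u : ℝ}

lemma symmSecondDiff_rpow_self (hα : 0 < α) (hu : 0 ≤ u) :
    symmSecondDiff (· ^ α) u u = (2 ^ α - 2) * u ^ α := by
  simp only [symmSecondDiff, ← two_mul, sub_self, zero_rpow hα.ne', mul_rpow zero_le_two hu]
  ring

lemma antitoneOn_symmSecondDiff_rpow (hα₁ : 1 ≤ α) (hα₂ : α ≤ 2) (hu : 0 ≤ u) :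
    AntitoneOn (symmSecondDiff (· ^ α) u) (Set.Ici u) :=
  antitoneOn_symmSecondDiff hu (continuous_rpow_const (by linarith)).continuousOn
    (fun x hx ↦ hasDerivAt_rpow_const (Or.inl hx.ne'))
    (((concaveOn_rpow (by linarith) (by linarith)).subset Set.Ioi_subset_Ici_self
      (convex_Ioi 0)).smul (by linarith))

lemma monotoneOn_symmSecondDiff_rpow (hα₀ : 0 < α) (hα₁ : α ≤ 1) (hu : 0 ≤ u) :
    MonotoneOn (symmSecondDiff (· ^ α) u) (Set.Ici u) :=
  monotoneOn_symmSecondDiff hu (continuous_rpow_const hα₀.le).continuousOn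
    (fun x hx ↦ hasDerivAt_rpow_const (Or.inl hx.ne'))
    ((convexOn_rpow_of_nonpos (by linarith)).smul hα₀.le)

end Rpow

noncomputable def subIncVar (H s t : ℝ) : ℝ :=
  subCov H t t + subCov H s s - 2 * subCov H s t

lemma incVar_eq_sum_subIncVar (N : ℕ) (a H : Fin N → ℝ) (s t : ℝ) :
    incVar N a H s t = ∑ i, a i ^ 2 * subIncVar (H i) s t := by
  simp only [incVar, mixedCov, subIncVar, mul_sum, ← sum_add_distrib, ← sum_sub_distrib]
  exact sum_congr rfl fun i _ ↦ by ring

section SubIncVar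

variable {H s t : ℝ}

lemma subIncVar_eq (hH : 0 < H) (hst : s ≤ t) :
    subIncVar H s t = (t - s) ^ (2 * H) - symmSecondDiff (· ^ (2 * H)) (t - s) (t + s) / 2 := by
  simp only [subIncVar, subCov, symmSecondDiff, sub_self, abs_zero,
    abs_of_nonneg (sub_nonneg.2 hst), zero_rpow (by positivity : 2 * H ≠ 0),
    show t + s + (t - s) = t + t by ring, show t + s - (t - s) = s + s by ring, add_comm s t]
  ring

lemma gam_mul_rpow_le_subIncVar (hH₀ : 0 < H) (hH₁ : H < 1) (hs : 0 ≤ s) (hst : s ≤ t) :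
    gam H * (t - s) ^ (2 * H) ≤ subIncVar H s t := by
  have hu : 0 ≤ t - s := sub_nonneg.2 hst
  rw [subIncVar_eq hH₀ hst, gam]
  split_ifs with hH
  · have hD := antitoneOn_symmSecondDiff_rpow (α := 2 * H) (by linarith) (by linarith) hu
      Set.self_mem_Ici (show t - s ≤ t + s by linarith) (show t - s ≤ t + s by linarith)
    rw [symmSecondDiff_rpow_self (by positivity) hu] at hD
    rw [rpow_sub_one two_ne_zero]
    linarith
  · have hD := ((concaveOn_rpow (p := 2 * H) (by positivity) (by linarith)).symmSecondDiff_nonpos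
      (show (0 : ℝ) ≤ t + s - (t - s) by linarith) (show (0 : ℝ) ≤ t + s + (t - s) by linarith))
    linarith

lemma subIncVar_le_nu_mul_rpow (hH₀ : 0 < H) (hs : 0 ≤ s) (hst : s ≤ t) :
    subIncVar H s t ≤ nu H * (t - s) ^ (2 * H) := by
  have hu : 0 ≤ t - s := sub_nonneg.2 hst
  rw [subIncVar_eq hH₀ hst, nu]
  split_ifs with hH
  · have hD := ((convexOn_rpow (p := 2 * H) (by linarith)).symmSecondDiff_nonneg
      (show (0 : ℝ) ≤ t + s - (t - s) by linarith) (show (0 : ℝ) ≤ t + s + (t - s) by linarith))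
    linarith
  · have hD := monotoneOn_symmSecondDiff_rpow (α := 2 * H) (by positivity) (by linarith) hu
      Set.self_mem_Ici (show t - s ≤ t + s by linarith) (show t - s ≤ t + s by linarith)
    rw [symmSecondDiff_rpow_self (by positivity) hu] at hD
    rw [rpow_sub_one two_ne_zero]
    linarith

end SubIncVar

/-- The two-sided bound
`Σ_i a_i² γ_i (t−s)^{2H_i} ≤ E(S_t^H(a) − S_s^H(a))² ≤ Σ_i a_i² ν_i (t−s)^{2H_i}`. -/
theorem msfbm_increment_variance_bounds (N : ℕ) (a H : Fin N → ℝ)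
    (hH : ∀ i, H i ∈ Set.Ioo (0 : ℝ) 1)
    (s t : ℝ) (hs : 0 ≤ s) (hst : s ≤ t) :
    (∑ i, (a i) ^ 2 * gam (H i) * (t - s) ^ (2 * H i)) ≤ incVar N a H s t ∧
      incVar N a H s t ≤ ∑ i, (a i) ^ 2 * nu (H i) * (t - s) ^ (2 * H i) := by
  rw [incVar_eq_sum_subIncVar]
  simp only [mul_assoc]
  constructor <;> gcongr with i
  · exact gam_mul_rpow_le_subIncVar (hH i).1 (hH i).2 hs hst
  · exact subIncVar_le_nu_mul_rpow (hH i).1 hs hst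
end

section
/- Sign of the increment correlations: let a ∈ ℝ^N \ {0} and 0 ≤ u < v ≤ s < t. Then (1) C_{u,v,s,t} = 0 if H_i = 1/2 for every i ∈ {1,…,N}; (2) C_{u,v,s,t} > 0 if H_i > 1/2 for every i ∈ {1,…,N}; (3) C_{u,v,s,t} < 0 if H_i < 1/2 for every i ∈ {1,…,N}. -/
/-!
Only the terms `(s + t)^{2H}` and `|t - s|^{2H}` of `c_H` survive in an increment covariance, and
for `0 ≤ u < v ≤ s < t` one finds `2 (c_H(v,t) - c_H(v,s) - c_H(u,t) + c_H(u,s)) = K(s) - K(t)` with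
`K(y) = m_{2H}(y, v) - m_{2H}(y, u)` and `m_p(y, x) = (y + x)^p + (y - x)^p`.
Since `∂_y m_p = p m_{p-1}`, the sign of `K'` is that of `m_{2H-1}(y, v) - m_{2H-1}(y, u)`, and
`x ↦ m_q(y, x)` is decreasing on `[0, y)` for `0 < q < 1` and increasing for `q < 0`, because
`∂_x m_q = q ((y + x)^{q-1} - (y - x)^{q-1})`. Hence `K` is decreasing for `H > 1/2`, increasing
for `H < 1/2`, and `K = 0` for `H = 1/2`. Summing with the weights `a_i² ≥ 0`, not all zero, gives
the signs.
-/

open Real Finset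

/-- The covariance of increments on non-overlapping intervals. -/
noncomputable def incCov (N : ℕ) (a H : Fin N → ℝ) (u v s t : ℝ) : ℝ :=
  mixedCov N a H v t - mixedCov N a H v s - mixedCov N a H u t + mixedCov N a H u s

noncomputable def symmRpow (p y x : ℝ) : ℝ := (y + x) ^ p + (y - x) ^ p

section symmRpow

variable {p y x : ℝ}

lemma continuous_symmRpow_center (hp : 0 ≤ p) (x : ℝ) : Continuous fun y => symmRpow p y x :=
  ((continuous_rpow_const hp).comp (continuous_id.add continuous_const)).add
    ((continuous_rpow_const hp).comp (continuous_id.sub continuous_const))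

lemma hasDerivAt_symmRpow_center (hxy : |x| < y) :
    HasDerivAt (fun y => symmRpow p y x) (p * symmRpow (p - 1) y x) y := by
  obtain ⟨h₁, h₂⟩ := abs_lt.1 hxy
  have d₁ := ((hasDerivAt_id' y).add_const x).rpow_const (p := p) (Or.inl (by linarith))
  have d₂ := ((hasDerivAt_id' y).sub_const x).rpow_const (p := p) (Or.inl (by linarith))
  refine (d₁.add d₂).congr_deriv ?_
  simp only [symmRpow]
  ring

lemma hasDerivAt_symmRpow_offset (hxy : |x| < y) :
    HasDerivAt (symmRpow p y) (p * ((y + x) ^ (p - 1) - (y - x) ^ (p - 1))) x := by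
  obtain ⟨h₁, h₂⟩ := abs_lt.1 hxy
  have d₁ := ((hasDerivAt_id' x).const_add y).rpow_const (p := p) (Or.inl (by linarith))
  have d₂ := ((hasDerivAt_id' x).const_sub y).rpow_const (p := p) (Or.inl (by linarith))
  refine (d₁.add d₂).congr_deriv ?_
  ring

lemma continuousOn_symmRpow_offset : ContinuousOn (symmRpow p y) (Set.Ico 0 y) :=
  continuousOn_of_forall_continuousAt fun _ hx =>
    (hasDerivAt_symmRpow_offset (p := p) ((abs_of_nonneg hx.1).trans_lt hx.2)).continuousAt

lemma rpow_add_lt_rpow_sub_of_neg (hx : 0 < x) (hxy : x < y) (hp : p < 0) :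
    (y + x) ^ p < (y - x) ^ p :=
  rpow_lt_rpow_of_neg (by linarith) (by linarith) hp

lemma symmRpow_strictAntiOn (hp₀ : 0 < p) (hp₁ : p < 1) :
    StrictAntiOn (symmRpow p y) (Set.Ico 0 y) := by
  refine strictAntiOn_of_deriv_neg (convex_Ico 0 y) continuousOn_symmRpow_offset fun x hx => ?_
  rw [interior_Ico] at hx
  rw [(hasDerivAt_symmRpow_offset ((abs_of_pos hx.1).trans_lt hx.2)).deriv]
  exact mul_neg_of_pos_of_neg hp₀ (sub_neg.2 (rpow_add_lt_rpow_sub_of_neg hx.1 hx.2 (by linarith)))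

lemma symmRpow_strictMonoOn (hp : p < 0) : StrictMonoOn (symmRpow p y) (Set.Ico 0 y) := by
  refine strictMonoOn_of_deriv_pos (convex_Ico 0 y) continuousOn_symmRpow_offset fun x hx => ?_
  rw [interior_Ico] at hx
  rw [(hasDerivAt_symmRpow_offset ((abs_of_pos hx.1).trans_lt hx.2)).deriv]
  exact mul_pos_of_neg_of_neg hp (sub_neg.2 (rpow_add_lt_rpow_sub_of_neg hx.1 hx.2 (by linarith)))

end symmRpow

section symmRpowSub

variable {p u v : ℝ}

lemma hasDerivAt_symmRpow_center_sub {y : ℝ} (hu : 0 ≤ u) (huv : u < v) (hvy : v < y) :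
    HasDerivAt (fun y => symmRpow p y v - symmRpow p y u)
      (p * (symmRpow (p - 1) y v - symmRpow (p - 1) y u)) y := by
  have hv : |v| < y := by rwa [abs_of_nonneg (hu.trans huv.le)]
  have hu' : |u| < y := by rw [abs_of_nonneg hu]; linarith
  exact ((hasDerivAt_symmRpow_center hv).sub (hasDerivAt_symmRpow_center hu')).congr_deriv
    (mul_sub p _ _).symm

lemma continuous_symmRpow_center_sub (hp : 0 ≤ p) :
    Continuous fun y => symmRpow p y v - symmRpow p y u :=
  (continuous_symmRpow_center hp v).sub (continuous_symmRpow_center hp u)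

lemma symmRpow_center_sub_strictAntiOn (hp₁ : 1 < p) (hp₂ : p < 2) (hu : 0 ≤ u) (huv : u < v) :
    StrictAntiOn (fun y => symmRpow p y v - symmRpow p y u) (Set.Ici v) := by
  refine strictAntiOn_of_deriv_neg (convex_Ici v)
    (continuous_symmRpow_center_sub (by linarith)).continuousOn fun y hy => ?_
  rw [interior_Ici] at hy
  rw [(hasDerivAt_symmRpow_center_sub hu huv hy).deriv]
  refine mul_neg_of_pos_of_neg (by linarith) (sub_neg.2 ?_)
  exact symmRpow_strictAntiOn (by linarith) (by linarith) ⟨hu, huv.trans hy⟩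
    ⟨hu.trans huv.le, hy⟩ huv

lemma symmRpow_center_sub_strictMonoOn (hp₀ : 0 < p) (hp₁ : p < 1) (hu : 0 ≤ u) (huv : u < v) :
    StrictMonoOn (fun y => symmRpow p y v - symmRpow p y u) (Set.Ici v) := by
  refine strictMonoOn_of_deriv_pos (convex_Ici v)
    (continuous_symmRpow_center_sub hp₀.le).continuousOn fun y hy => ?_
  rw [interior_Ici] at hy
  rw [(hasDerivAt_symmRpow_center_sub hu huv hy).deriv]
  refine mul_pos hp₀ (sub_pos.2 ?_)
  exact symmRpow_strictMonoOn (by linarith) ⟨hu, huv.trans hy⟩ ⟨hu.trans huv.le, hy⟩ huv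

end symmRpowSub

noncomputable def subIncCov (H u v s t : ℝ) : ℝ :=
  subCov H v t - subCov H v s - subCov H u t + subCov H u s

section subIncCov

variable {H u v s t : ℝ}

lemma subIncCov_eq (huv : u ≤ v) (hvs : v ≤ s) (hst : s ≤ t) :
    subIncCov H u v s t = ((symmRpow (2 * H) s v - symmRpow (2 * H) s u) -
      (symmRpow (2 * H) t v - symmRpow (2 * H) t u)) / 2 := by
  simp only [subIncCov, subCov, symmRpow, abs_of_nonneg (sub_nonneg.2 hvs),
    abs_of_nonneg (sub_nonneg.2 (hvs.trans hst)), abs_of_nonneg (sub_nonneg.2 (huv.trans hvs)),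
    abs_of_nonneg (sub_nonneg.2 (huv.trans (hvs.trans hst)))]
  rw [add_comm v s, add_comm v t, add_comm u s, add_comm u t]
  ring

lemma subIncCov_half (huv : u ≤ v) (hvs : v ≤ s) (hst : s ≤ t) :
    subIncCov (1 / 2) u v s t = 0 := by
  rw [subIncCov_eq huv hvs hst]
  norm_num [symmRpow]

lemma subIncCov_pos (hH₁ : 1 / 2 < H) (hH₂ : H < 1) (hu : 0 ≤ u) (huv : u < v) (hvs : v ≤ s)
    (hst : s < t) : 0 < subIncCov H u v s t := by
  rw [subIncCov_eq huv.le hvs hst.le]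
  have := symmRpow_center_sub_strictAntiOn (p := 2 * H) (by linarith) (by linarith) hu huv
    (Set.mem_Ici.2 hvs) (Set.mem_Ici.2 (hvs.trans hst.le)) hst
  linarith

lemma subIncCov_neg (hH₀ : 0 < H) (hH₁ : H < 1 / 2) (hu : 0 ≤ u) (huv : u < v) (hvs : v ≤ s)
    (hst : s < t) : subIncCov H u v s t < 0 := by
  rw [subIncCov_eq huv.le hvs hst.le]
  have := symmRpow_center_sub_strictMonoOn (p := 2 * H) (by linarith) (by linarith) hu huv
    (Set.mem_Ici.2 hvs) (Set.mem_Ici.2 (hvs.trans hst.le)) hst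
  linarith

end subIncCov

lemma incCov_eq_sum (N : ℕ) (a H : Fin N → ℝ) (u v s t : ℝ) :
    incCov N a H u v s t = ∑ i, a i ^ 2 * subIncCov (H i) u v s t := by
  simp only [incCov, mixedCov, subIncCov, mul_add, mul_sub, sum_add_distrib, sum_sub_distrib]

lemma sum_sq_mul_pos {ι : Type*} [Fintype ι] {a c : ι → ℝ} (ha : a ≠ 0) (hc : ∀ i, 0 < c i) :
    0 < ∑ i, a i ^ 2 * c i := by
  obtain ⟨i, hi⟩ := Function.ne_iff.1 ha
  exact sum_pos' (fun j _ => mul_nonneg (sq_nonneg _) (hc j).le)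
    ⟨i, mem_univ i, mul_pos (sq_pos_of_ne_zero hi) (hc i)⟩

/-- Sign of the increment correlations of the msfBm: zero if all `H_i = 1/2`,
positive if all `H_i > 1/2`, negative if all `H_i < 1/2`. -/
theorem msfbm_increment_covariance_sign (N : ℕ) (a H : Fin N → ℝ)
    (hH : ∀ i, H i ∈ Set.Ioo (0 : ℝ) 1) (ha : a ≠ 0)
    (u v s t : ℝ) (hu : 0 ≤ u) (huv : u < v) (hvs : v ≤ s) (hst : s < t) :
    ((∀ i, H i = 1 / 2) → incCov N a H u v s t = 0) ∧
    ((∀ i, 1 / 2 < H i) → 0 < incCov N a H u v s t) ∧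
    ((∀ i, H i < 1 / 2) → incCov N a H u v s t < 0) := by
  rw [incCov_eq_sum]
  refine ⟨fun h => ?_, fun h => ?_, fun h => ?_⟩
  · refine sum_eq_zero fun i _ => ?_
    rw [h i, subIncCov_half huv.le hvs hst.le, mul_zero]
  · exact sum_sq_mul_pos ha fun i => subIncCov_pos (h i) (hH i).2 hu huv hvs hst
  · have := sum_sq_mul_pos ha fun i => neg_pos.2 (subIncCov_neg (hH i).1 (h i) hu huv hvs hst)
    simpa only [mul_neg, sum_neg_distrib, neg_pos] using this
end

section
/- Asymptotics of the unit-increment covariance: let a ∈ ℝ^N \ {0}, let H* = max{H_i : 1 ≤ i ≤ N, a_i ≠ 0}, and fix a natural number p. Then, as the integer n tends to infinity, n^{3−2H*} · ( C(p,n) − Σ_{i=1}^N 2(1−H_i)H_i(2H_i−1)(2p+1) a_i² n^{2H_i−3} ) tends to 0; i.e. C(p,n) = Σ_{i=1}^N [ 2(1−H_i)H_i(2H_i−1)(2p+1) a_i² n^{2H_i−3} + o(n^{2H_i−3}) ]. -/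
/-!
For `n ≥ 1` the unit increment of `c_H` along `(x, x + n)` is half the central second difference
at `n` of `f y = y ^ (2H) - (y + q) ^ (2H)`, `q = 2x + 1` (the terms `s ^ (2H)`, `t ^ (2H)`
cancel). Two applications of the mean value theorem turn this second difference into `f'' ξ`
with `|ξ - n| < 1`, and `f'' y = 2H(2H - 1)(y ^ (2H - 2) - (y + q) ^ (2H - 2))` is asymptotic to
`2H(2H - 1)(2 - 2H) q y ^ (2H - 3)`, the derivative of `h ↦ (1 + q h) ^ (2H - 2)` at `0` giving
the constant. Each summand of `C(p, n)` is therefore its main term plus `o(n ^ (2H_i - 3))`,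
which is `o(n ^ (2H* - 3))` whenever `a_i ≠ 0`.
-/

open Real Finset Filter

/-- The unit-increment covariance
`C(x,n) = Cov(S_{x+1}^H − S_x^H, S_{x+n+1}^H − S_{x+n}^H)`. -/
noncomputable def unitCov (N : ℕ) (a H : Fin N → ℝ) (x : ℝ) (n : ℕ) : ℝ :=
  mixedCov N a H (x + 1) (x + n + 1) - mixedCov N a H (x + 1) (x + n)
    - mixedCov N a H x (x + n + 1) + mixedCov N a H x (x + n)

open Set Topology Asymptotics

def secondDiff (f : ℝ → ℝ) (x : ℝ) : ℝ := f (x + 1) - 2 * f x + f (x - 1)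

theorem exists_secondDiff_eq {f f' f'' : ℝ → ℝ} {x : ℝ}
    (hf : ∀ y ∈ Icc (x - 1) (x + 1), HasDerivAt f (f' y) y)
    (hf' : ∀ y ∈ Icc (x - 1) (x + 1), HasDerivAt f' (f'' y) y) :
    ∃ ξ ∈ Ioo (x - 1) (x + 1), secondDiff f x = f'' ξ := by
  have hg : ∀ y ∈ Icc (x - 1) x,
      HasDerivAt (fun y => f (y + 1) - f y) (f' (y + 1) - f' y) y := fun y hy =>
    ((hf (y + 1) ⟨by linarith [hy.1], by linarith [hy.2]⟩).comp_add_const y 1).sub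
      (hf y ⟨hy.1, by linarith [hy.2]⟩)
  obtain ⟨η, hη, hgη⟩ := exists_hasDerivAt_eq_slope _ _ (by linarith : x - 1 < x)
    (fun y hy => (hg y hy).continuousAt.continuousWithinAt)
    (fun y hy => hg y (Ioo_subset_Icc_self hy))
  have hf'η : ∀ y ∈ Icc η (η + 1), HasDerivAt f' (f'' y) y := fun y hy =>
    hf' y ⟨by linarith [hη.1, hy.1], by linarith [hη.2, hy.2]⟩
  obtain ⟨ξ, hξ, hf'ξ⟩ := exists_hasDerivAt_eq_slope f' f'' (by linarith : η < η + 1)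
    (fun y hy => (hf'η y hy).continuousAt.continuousWithinAt)
    (fun y hy => hf'η y (Ioo_subset_Icc_self hy))
  refine ⟨ξ, ⟨by linarith [hη.1, hξ.1], by linarith [hη.2, hξ.2]⟩, ?_⟩
  simp only [sub_sub_cancel, add_sub_cancel_left, div_one, sub_add_cancel] at hgη hf'ξ
  rw [secondDiff, hf'ξ, hgη]
  ring

noncomputable def powGap (α q x : ℝ) : ℝ := x ^ α - (x + q) ^ α

theorem hasDerivAt_powGap (α : ℝ) {q x : ℝ} (hq : 0 ≤ q) (hx : 0 < x) :
    HasDerivAt (powGap α q) (α * powGap (α - 1) q x) x := by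
  have h := (hasDerivAt_rpow_const (p := α) (Or.inl hx.ne')).sub
    ((hasDerivAt_rpow_const (p := α) (Or.inl (by positivity : x + q ≠ 0))).comp_add_const x q)
  exact h.congr_deriv (by rw [powGap]; ring)

theorem tendsto_rpow_mul_powGap (α : ℝ) {q : ℝ} (hq : 0 ≤ q) :
    Tendsto (fun x => x ^ (1 - α) * powGap α q x) atTop (𝓝 (-(q * α))) := by
  have hu : HasDerivAt (fun h : ℝ => (1 + q * h) ^ α) (q * α) 0 := by
    simpa using (((hasDerivAt_id (0 : ℝ)).const_mul q).const_add 1).rpow_const (p := α) (by simp)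
  have hslope := (hasDerivAt_iff_tendsto_slope.mp hu).comp
    (tendsto_inv_atTop_nhdsGT_zero.mono_right (nhdsWithin_mono _ fun _ h => ne_of_gt h))
  refine hslope.neg.congr' ?_
  filter_upwards [eventually_gt_atTop 0] with x hx
  have hxq : (x + q) ^ α = x ^ α * (1 + q * x⁻¹) ^ α := by
    rw [← mul_rpow hx.le (by positivity)]
    congr 1
    field_simp
  rw [Function.comp_apply, slope_def_field, powGap, hxq, mul_zero, add_zero, one_rpow, sub_zero,
    div_inv_eq_mul, mul_sub, ← mul_assoc, ← rpow_add hx, sub_add_cancel, rpow_one]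
  ring

theorem tendsto_rpow_mul_comp_of_abs_sub_le {g ξ : ℝ → ℝ} {β L d : ℝ}
    (hg : Tendsto (fun x => x ^ β * g x) atTop (𝓝 L))
    (hξ : ∀ᶠ x in atTop, |ξ x - x| ≤ d) :
    Tendsto (fun x => x ^ β * g (ξ x)) atTop (𝓝 L) := by
  have hξ_top : Tendsto ξ atTop atTop :=
    tendsto_atTop_mono' _ (hξ.mono fun x hx => by simp only [id]; linarith [(abs_le.mp hx).1])
      (tendsto_atTop_add_const_right _ (-d) tendsto_id)
  have hratio : Tendsto (fun x => ξ x / x) atTop (𝓝 1) := by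
    have h0 : Tendsto (fun x => (ξ x - x) / x) atTop (𝓝 0) := by
      refine squeeze_zero_norm' ?_ ((tendsto_const_nhds (x := d)).div_atTop tendsto_id)
      filter_upwards [hξ, eventually_gt_atTop 0] with x hx hx0
      rw [norm_div, norm_eq_abs, norm_of_nonneg hx0.le]
      exact div_le_div_of_nonneg_right hx hx0.le
    have h1 : Tendsto (fun x => 1 + (ξ x - x) / x) atTop (𝓝 1) := by
      simpa using h0.const_add 1
    refine h1.congr' ?_
    filter_upwards [eventually_gt_atTop 0] with x hx
    field_simp
    ring
  have h := ((hratio.inv₀ one_ne_zero).rpow_const (p := β)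
    (Or.inl (inv_ne_zero one_ne_zero))).mul (hg.comp hξ_top)
  rw [inv_one, one_rpow, one_mul] at h
  refine h.congr' ?_
  filter_upwards [eventually_gt_atTop 0, hξ_top.eventually_gt_atTop 0] with x hx hξx
  rw [Function.comp_apply, inv_div, div_rpow hx.le hξx.le]
  field_simp

theorem tendsto_rpow_mul_secondDiff_powGap (α : ℝ) {q : ℝ} (hq : 0 ≤ q) :
    Tendsto (fun x => x ^ (3 - α) * secondDiff (powGap α q) x) atTop
      (𝓝 (α * (α - 1) * (2 - α) * q)) := by
  have hmvt : ∀ x, ∃ ξ, 1 < x →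
      |ξ - x| ≤ 1 ∧ secondDiff (powGap α q) x = α * (α - 1) * powGap (α - 2) q ξ := by
    intro x
    by_cases hx : 1 < x
    · have hpos : ∀ y ∈ Icc (x - 1) (x + 1), 0 < y := fun y hy => by linarith [hy.1]
      obtain ⟨ξ, hξ, hdiff⟩ := exists_secondDiff_eq
        (fun y hy => hasDerivAt_powGap α hq (hpos y hy))
        (fun y hy => (hasDerivAt_powGap (α - 1) hq (hpos y hy)).const_mul α)
      refine ⟨ξ, fun _ => ⟨abs_le.mpr ⟨by linarith [hξ.1], by linarith [hξ.2]⟩, ?_⟩⟩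
      rw [hdiff, sub_sub, one_add_one_eq_two, mul_assoc]
    · exact ⟨x, fun h => absurd h hx⟩
  choose ξ hξ using hmvt
  have hlim : Tendsto (fun y => y ^ (3 - α) * (α * (α - 1) * powGap (α - 2) q y)) atTop
      (𝓝 (α * (α - 1) * (2 - α) * q)) := by
    convert (tendsto_rpow_mul_powGap (α - 2) hq).const_mul (α * (α - 1)) using 1
    · ext y
      rw [show 1 - (α - 2) = 3 - α by ring]
      ring
    · ring_nf
  refine (tendsto_rpow_mul_comp_of_abs_sub_le hlim
    (eventually_gt_atTop 1 |>.mono fun x hx => (hξ x hx).1)).congr' ?_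
  filter_upwards [eventually_gt_atTop 1] with x hx
  rw [(hξ x hx).2]

theorem secondDiff_powGap_sub_isLittleO (α : ℝ) {q : ℝ} (hq : 0 ≤ q) :
    (fun x => secondDiff (powGap α q) x - α * (α - 1) * (2 - α) * q * x ^ (α - 3))
      =o[atTop] fun x => x ^ (α - 3) := by
  refine (isLittleO_iff_tendsto' ?_).mpr ?_
  · filter_upwards [eventually_gt_atTop 0] with x hx h
    exact absurd h (rpow_pos_of_pos hx _).ne'
  · have h := (tendsto_rpow_mul_secondDiff_powGap α hq).sub_const (α * (α - 1) * (2 - α) * q)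
    rw [sub_self] at h
    refine h.congr' ?_
    filter_upwards [eventually_gt_atTop 0] with x hx
    rw [sub_div, mul_div_cancel_right₀ _ (rpow_pos_of_pos hx _).ne', ← neg_sub α 3,
      rpow_neg hx.le, div_eq_inv_mul]

theorem isBigO_rpow_rpow_atTop_of_le {a b : ℝ} (hab : a ≤ b) :
    (fun x : ℝ => x ^ a) =O[atTop] fun x => x ^ b :=
  Eventually.isBigO <| (eventually_ge_atTop 1).mono fun x hx => by
    rw [norm_of_nonneg (rpow_nonneg (zero_le_one.trans hx) a)]
    exact rpow_le_rpow_of_exponent_le hx hab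

theorem subCov_unit_increment (H x : ℝ) {t : ℝ} (ht : 1 ≤ t) :
    subCov H (x + 1) (x + t + 1) - subCov H (x + 1) (x + t) - subCov H x (x + t + 1)
      + subCov H x (x + t) = secondDiff (powGap (2 * H) (2 * x + 1)) t / 2 := by
  have d1 : |x + t + 1 - (x + 1)| = t := by
    rw [show x + t + 1 - (x + 1) = t by ring, abs_of_nonneg (by linarith)]
  have d2 : |x + t - (x + 1)| = t - 1 := by
    rw [show x + t - (x + 1) = t - 1 by ring, abs_of_nonneg (by linarith)]
  have d3 : |x + t + 1 - x| = t + 1 := by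
    rw [show x + t + 1 - x = t + 1 by ring, abs_of_nonneg (by linarith)]
  have d4 : |x + t - x| = t := by
    rw [show x + t - x = t by ring, abs_of_nonneg (by linarith)]
  simp only [subCov, secondDiff, powGap, d1, d2, d3, d4]
  ring_nf

theorem unitCov_eq_sum_secondDiff (N : ℕ) (a H : Fin N → ℝ) (x : ℝ) {n : ℕ}
    (hn : 1 ≤ n) :
    unitCov N a H x n = ∑ i, a i ^ 2 * (secondDiff (powGap (2 * H i) (2 * x + 1)) n / 2) := by
  simp only [unitCov, mixedCov, ← Finset.sum_sub_distrib, ← Finset.sum_add_distrib, ← mul_sub,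
    ← mul_add, subCov_unit_increment _ x (Nat.one_le_cast.mpr hn)]

theorem msfbm_unit_increment_covariance_asymptotics_general (N : ℕ) (a H : Fin N → ℝ)
    (Hstar : ℝ) (hHstar : IsGreatest {h : ℝ | ∃ i, a i ≠ 0 ∧ H i = h} Hstar)
    (p : ℕ) :
    Tendsto (fun n : ℕ =>
        (n : ℝ) ^ (3 - 2 * Hstar) *
          (unitCov N a H (p : ℝ) n -
            ∑ i, 2 * (1 - H i) * H i * (2 * H i - 1) * (2 * (p : ℝ) + 1) * (a i) ^ 2 *
              (n : ℝ) ^ (2 * H i - 3)))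
      atTop (nhds 0) := by
  have hq : (0 : ℝ) ≤ 2 * p + 1 := by positivity
  have hterm : ∀ i, (fun x : ℝ =>
      a i ^ 2 * (secondDiff (powGap (2 * H i) (2 * p + 1)) x / 2) -
        2 * (1 - H i) * H i * (2 * H i - 1) * (2 * (p : ℝ) + 1) * a i ^ 2 * x ^ (2 * H i - 3))
      =o[atTop] fun x => x ^ (2 * Hstar - 3) := by
    intro i
    rcases eq_or_ne (a i) 0 with hai | hai
    · simp [hai]
    · refine (((secondDiff_powGap_sub_isLittleO (2 * H i) hq).const_mul_left (a i ^ 2 / 2))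
        |>.congr_left fun x => by ring).trans_isBigO (isBigO_rpow_rpow_atTop_of_le ?_)
      linarith [hHstar.2 ⟨i, hai, rfl⟩]
  refine ((IsLittleO.fun_sum (s := Finset.univ) fun i _ => hterm i).comp_tendsto
    tendsto_natCast_atTop_atTop).tendsto_div_nhds_zero.congr' ?_
  filter_upwards [eventually_ge_atTop 1] with n hn
  simp only [Function.comp_apply]
  rw [unitCov_eq_sum_secondDiff N a H p hn, ← Finset.sum_sub_distrib, div_eq_inv_mul,
    ← rpow_neg (Nat.cast_nonneg n), neg_sub]

/-- Asymptotics of the unit-increment covariance: with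
`H* = max{H_i : a_i ≠ 0}`, as `n → ∞`,
`C(p,n) = Σ_i [2(1−H_i)H_i(2H_i−1)(2p+1) a_i² n^{2H_i−3} + o(n^{2H_i−3})]`, i.e.
`n^{3−2H*}·(C(p,n) − Σ_i 2(1−H_i)H_i(2H_i−1)(2p+1) a_i² n^{2H_i−3}) → 0`. -/
theorem msfbm_unit_increment_covariance_asymptotics (N : ℕ) (a H : Fin N → ℝ)
    (hH : ∀ i, H i ∈ Set.Ioo (0 : ℝ) 1) (ha : a ≠ 0)
    (Hstar : ℝ) (hHstar : IsGreatest {h : ℝ | ∃ i, a i ≠ 0 ∧ H i = h} Hstar)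
    (p : ℕ) :
    Tendsto (fun n : ℕ =>
        (n : ℝ) ^ (3 - 2 * Hstar) *
          (unitCov N a H (p : ℝ) n -
            ∑ i, 2 * (1 - H i) * H i * (2 * H i - 1) * (2 * (p : ℝ) + 1) * (a i) ^ 2 *
              (n : ℝ) ^ (2 * H i - 3)))
      atTop (nhds 0) :=
  msfbm_unit_increment_covariance_asymptotics_general N a H Hstar hHstar p
end

section
/- Short-range dependence: for every H ∈ (0,1)^N, every a ∈ ℝ^N, and every natural number p, the series Σ_{n≥1} C(p,n) of unit-increment covariances of the mixed sub-fractional Brownian motion converges absolutely (the function n ↦ C(p,n) is summable). -/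
open Real Finset

/-!
Writing `D_h = Δ²(y ↦ y ^ h)` for the second forward difference with unit step, each component
contributes `a_i² / 2 · (D_{2H_i}(n) - D_{2H_i}(n + 2p + 1))` to `C(p, n + 1)`. For `0 ≤ h ≤ 1`
the first derivative of `y ^ h` is antitone and the second monotone, so `D_h` is nonpositive and
monotone on `(0, ∞)`; for `1 ≤ h ≤ 2` the same holds for `-y ^ h`. A bounded monotone sequence has
summable increments over any fixed lag.
-/

open scoped fwdDiff

theorem Monotone.summable_sub_of_bddAbove {u : ℕ → ℝ} (hu : Monotone u)
    (hb : BddAbove (Set.range u)) (L : ℕ) : Summable fun n => u (n + L) - u n := by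
  obtain ⟨B, hB⟩ := hb
  have hstep : Summable fun n => u (n + 1) - u n :=
    summable_of_sum_range_le (c := B - u 0) (fun n => sub_nonneg.mpr (hu n.le_succ)) fun M => by
      rw [sum_range_sub]
      linarith [hB ⟨M, rfl⟩]
  have htele : ∀ n, u (n + L) - u n = ∑ k ∈ range L, (u (n + k + 1) - u (n + k)) := fun n => by
    simpa [add_assoc] using (sum_range_sub (fun k => u (n + k)) L).symm
  simpa only [htele] using summable_sum fun k _ => (summable_nat_add_iff k).mpr hstep

section ForwardDifference

variable {c : ℝ} {f f' f'' : ℝ → ℝ}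

theorem hasDerivAt_fwdDiff (hc : 0 ≤ c) (hf : ∀ y, 0 < y → HasDerivAt f (f' y) y)
    {y : ℝ} (hy : 0 < y) : HasDerivAt (Δ_[c] f) (Δ_[c] f' y) y :=
  ((hf (y + c) (by linarith)).comp_add_const y c).sub (hf y hy)

theorem monotoneOn_fwdDiff (hc : 0 ≤ c) (hf : ∀ y, 0 < y → HasDerivAt f (f' y) y)
    (hf' : MonotoneOn f' (Set.Ioi 0)) : MonotoneOn (Δ_[c] f) (Set.Ioi 0) := by
  refine monotoneOn_of_hasDerivWithinAt_nonneg (f' := Δ_[c] f') (convex_Ioi 0)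
    (fun y hy => (hasDerivAt_fwdDiff hc hf hy).continuousAt.continuousWithinAt) ?_ ?_
    <;> rw [interior_Ioi]
  · exact fun y hy => (hasDerivAt_fwdDiff hc hf hy).hasDerivWithinAt
  · intro y (hy : 0 < y)
    exact sub_nonneg.mpr (hf' hy (Set.mem_Ioi.mpr (by linarith)) (by linarith))

theorem antitoneOn_fwdDiff (hc : 0 ≤ c) (hf : ∀ y, 0 < y → HasDerivAt f (f' y) y)
    (hf' : AntitoneOn f' (Set.Ioi 0)) : AntitoneOn (Δ_[c] f) (Set.Ioi 0) := by
  intro a ha b hb hab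
  have := monotoneOn_fwdDiff hc (fun y hy => (hf y hy).neg) hf'.neg ha hb hab
  simp only [fwdDiff, Pi.neg_apply] at this ⊢
  linarith

theorem monotoneOn_fwdDiff_fwdDiff (hc : 0 ≤ c)
    (hf : ∀ y, 0 < y → HasDerivAt f (f' y) y) (hf' : ∀ y, 0 < y → HasDerivAt f' (f'' y) y)
    (hf'' : MonotoneOn f'' (Set.Ioi 0)) : MonotoneOn (Δ_[c] (Δ_[c] f)) (Set.Ioi 0) :=
  monotoneOn_fwdDiff hc (fun _ hy => hasDerivAt_fwdDiff hc hf hy) (monotoneOn_fwdDiff hc hf' hf'')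

theorem fwdDiff_fwdDiff_nonpos (hc : 0 ≤ c) (hf : ∀ y, 0 < y → HasDerivAt f (f' y) y)
    (hf' : AntitoneOn f' (Set.Ioi 0)) {y : ℝ} (hy : 0 < y) : Δ_[c] (Δ_[c] f) y ≤ 0 :=
  sub_nonpos.mpr (antitoneOn_fwdDiff hc hf hf' hy (Set.mem_Ioi.mpr (by linarith)) (by linarith))

theorem summable_fwdDiff_fwdDiff_sub (hf : ∀ y, 0 < y → HasDerivAt f (f' y) y)
    (hf' : ∀ y, 0 < y → HasDerivAt f' (f'' y) y) (hf'_anti : AntitoneOn f' (Set.Ioi 0))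
    (hf'' : MonotoneOn f'' (Set.Ioi 0)) (L : ℕ) :
    Summable fun n : ℕ => Δ_[1] (Δ_[1] f) (n + 1) - Δ_[1] (Δ_[1] f) (n + 1 + L) := by
  have hu : Monotone fun n : ℕ => Δ_[1] (Δ_[1] f) (n + 1) := fun m n hmn =>
    monotoneOn_fwdDiff_fwdDiff zero_le_one hf hf' hf'' (Set.mem_Ioi.mpr (by positivity))
      (Set.mem_Ioi.mpr (by positivity)) (by exact_mod_cast Nat.add_le_add_right hmn 1)
  have hb : BddAbove (Set.range fun n : ℕ => Δ_[1] (Δ_[1] f) (n + 1)) := by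
    refine ⟨0, ?_⟩
    rintro _ ⟨n, rfl⟩
    exact fwdDiff_fwdDiff_nonpos zero_le_one hf hf'_anti (by positivity)
  refine (hu.summable_sub_of_bddAbove hb L).neg.congr fun n => ?_
  push_cast
  ring_nf

end ForwardDifference

theorem summable_fwdDiff_fwdDiff_rpow_sub {h : ℝ} (h0 : 0 ≤ h) (h2 : h ≤ 2) (L : ℕ) :
    Summable fun n : ℕ =>
      Δ_[1] (Δ_[1] fun y : ℝ => y ^ h) n - Δ_[1] (Δ_[1] fun y : ℝ => y ^ h) (n + L) := by
  refine (summable_nat_add_iff 1).mp ?_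
  have hf : ∀ y : ℝ, 0 < y → HasDerivAt (fun y => y ^ h) (h * y ^ (h - 1)) y :=
    fun y hy => Real.hasDerivAt_rpow_const (Or.inl hy.ne')
  have hf' : ∀ y : ℝ, 0 < y →
      HasDerivAt (fun y => h * y ^ (h - 1)) (h * (h - 1) * y ^ (h - 2)) y := fun y hy => by
    simpa [sub_sub, one_add_one_eq_two, mul_assoc] using
      (Real.hasDerivAt_rpow_const (p := h - 1) (Or.inl hy.ne')).const_mul h
  have hanti : AntitoneOn (fun y : ℝ => y ^ (h - 2)) (Set.Ioi 0) :=
    antitoneOn_rpow_Ioi_of_exponent_nonpos (by linarith)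
  rcases le_total h 1 with h1 | h1
  · refine (summable_fwdDiff_fwdDiff_sub hf hf' ?_ ?_ L).congr fun n => ?_
    · exact fun a ha b hb hab => mul_le_mul_of_nonneg_left
        (antitoneOn_rpow_Ioi_of_exponent_nonpos (by linarith) ha hb hab) h0
    · exact fun a ha b hb hab => mul_le_mul_of_nonpos_left (hanti ha hb hab)
        (mul_nonpos_of_nonneg_of_nonpos h0 (by linarith))
    · push_cast
      ring_nf
  · refine (summable_fwdDiff_fwdDiff_sub (fun y hy => (hf y hy).neg)
      (fun y hy => (hf' y hy).neg) ?_ ?_ L).neg.congr fun n => ?_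
    · exact fun a ha b hb hab => neg_le_neg (mul_le_mul_of_nonneg_left
        (Real.rpow_le_rpow (le_of_lt ha) hab (by linarith)) h0)
    · exact fun a ha b hb hab => neg_le_neg (mul_le_mul_of_nonneg_left (hanti ha hb hab)
        (mul_nonneg h0 (by linarith)))
    · simp only [fwdDiff, Pi.neg_apply]
      push_cast
      ring_nf

theorem subCov_unit_increment_s10 (H x m : ℝ) (hm : 1 ≤ m) :
    subCov H (x + 1) (x + m + 1) - subCov H (x + 1) (x + m) - subCov H x (x + m + 1)
        + subCov H x (x + m)
      = (Δ_[1] (Δ_[1] fun y : ℝ => y ^ (2 * H)) (m - 1)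
          - Δ_[1] (Δ_[1] fun y : ℝ => y ^ (2 * H)) (2 * x + m)) / 2 := by
  simp only [subCov, fwdDiff]
  rw [abs_of_nonneg (by linarith : 0 ≤ x + m + 1 - (x + 1)),
    abs_of_nonneg (by linarith : 0 ≤ x + m - (x + 1)),
    abs_of_nonneg (by linarith : 0 ≤ x + m + 1 - x), abs_of_nonneg (by linarith : 0 ≤ x + m - x)]
  ring_nf

theorem unitCov_succ_eq_sum (N : ℕ) (a H : Fin N → ℝ) (x : ℝ) (n : ℕ) :
    unitCov N a H x (n + 1) = ∑ i, (a i) ^ 2 / 2 *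
      (Δ_[1] (Δ_[1] fun y : ℝ => y ^ (2 * H i)) n
        - Δ_[1] (Δ_[1] fun y : ℝ => y ^ (2 * H i)) (2 * x + n + 1)) := by
  simp only [unitCov, mixedCov, ← sum_sub_distrib, ← sum_add_distrib, ← mul_sub, ← mul_add]
  refine sum_congr rfl fun i _ => ?_
  rw [subCov_unit_increment_s10 (H i) x _ (by simp)]
  push_cast
  ring_nf

/-- Short-range dependence: the series `Σ_{n≥1} C(p,n)` of unit-increment covariances of
the msfBm converges absolutely. -/
theorem msfbm_short_range_dependence (N : ℕ) (a H : Fin N → ℝ)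
    (hH : ∀ i, H i ∈ Set.Ioo (0 : ℝ) 1) (p : ℕ) :
    Summable (fun n : ℕ => |unitCov N a H (p : ℝ) (n + 1)|) := by
  have hterm : ∀ i, Summable fun n : ℕ => (a i) ^ 2 / 2 *
      (Δ_[1] (Δ_[1] fun y : ℝ => y ^ (2 * H i)) n
        - Δ_[1] (Δ_[1] fun y : ℝ => y ^ (2 * H i)) (n + (2 * p + 1 : ℕ))) := fun i =>
    (summable_fwdDiff_fwdDiff_rpow_sub (by linarith [(hH i).1]) (by linarith [(hH i).2])
      _).mul_left _
  refine summable_abs_iff.mpr ((summable_sum (s := univ) fun i _ => hterm i).congr fun n => ?_)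
  rw [unitCov_succ_eq_sum]
  push_cast
  ring_nf
end

section
/- For every integer n ≥ 1, the unit-increment covariance of the mixed sub-fractional Brownian motion converges, as x → ∞, to the corresponding stationary increment covariance of the mixed fractional Brownian motion: lim_{x→∞} C(x,n) = Σ_{i=1}^N (a_i²/2) [ (n+1)^{2H_i} − 2n^{2H_i} + (n−1)^{2H_i} ]. -/
open Real Finset Filter

/- Expanding the definitions, the unit-increment covariance is the stationary fractional
increment covariance, which does not depend on `x`, minus second differences of `y ↦ y ^ (2 H_i)`
at `y = 2x + n`. For an exponent `α < 2` such a second difference is bounded by the supremum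
`|α (α - 1)| y ^ (α - 2)` of the second derivative on `[y, y + 2]`, so it vanishes at infinity. -/

theorem abs_second_difference_le_of_abs_deriv2_le {f f' f'' : ℝ → ℝ} {y M : ℝ}
    (hf : ∀ t ∈ Set.Icc y (y + 2), HasDerivAt f (f' t) t)
    (hf' : ∀ t ∈ Set.Icc y (y + 2), HasDerivAt f' (f'' t) t)
    (hM : ∀ t ∈ Set.Icc y (y + 2), |f'' t| ≤ M) :
    |f (y + 2) - 2 * f (y + 1) + f y| ≤ M := by
  have hshift : ∀ t ∈ Set.Icc y (y + 1), t + 1 ∈ Set.Icc y (y + 2) ∧ t ∈ Set.Icc y (y + 2) :=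
    fun t ⟨h₁, h₂⟩ => ⟨⟨by linarith, by linarith⟩, ⟨h₁, by linarith⟩⟩
  have hf'_lip : ∀ t ∈ Set.Icc y (y + 1), ‖f' (t + 1) - f' t‖ ≤ M := fun t ht => by
    obtain ⟨ht₁, ht⟩ := hshift t ht
    simpa using (convex_Icc y (y + 2)).norm_image_sub_le_of_norm_hasDerivWithin_le
      (fun s hs => (hf' s hs).hasDerivWithinAt) hM ht ht₁
  have hg : ∀ t ∈ Set.Icc y (y + 1),
      HasDerivWithinAt (fun s => f (s + 1) - f s) (f' (t + 1) - f' t) (Set.Icc y (y + 1)) t :=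
    fun t ht => (((hf _ (hshift t ht).1).comp_add_const t 1).sub
      (hf t (hshift t ht).2)).hasDerivWithinAt
  have key := (convex_Icc y (y + 1)).norm_image_sub_le_of_norm_hasDerivWithin_le hg hf'_lip
    (Set.left_mem_Icc.2 (by linarith)) (Set.right_mem_Icc.2 (by linarith))
  have h2 : y + 1 + 1 = y + 2 := by ring
  rw [h2] at key
  simpa [Real.norm_eq_abs, show f (y + 2) - f (y + 1) - (f (y + 1) - f y)
    = f (y + 2) - 2 * f (y + 1) + f y by ring] using key

theorem tendsto_rpow_second_difference_atTop {α : ℝ} (hα : α < 2) :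
    Tendsto (fun y : ℝ => (y + 2) ^ α - 2 * (y + 1) ^ α + y ^ α) atTop (nhds 0) := by
  have hbound : ∀ᶠ y in atTop,
      ‖(y + 2) ^ α - 2 * (y + 1) ^ α + y ^ α‖ ≤ |α * (α - 1)| * y ^ (α - 2) := by
    filter_upwards [eventually_gt_atTop 0] with y hy
    have hpos : ∀ t ∈ Set.Icc y (y + 2), t ≠ 0 := fun t ht => (hy.trans_le ht.1).ne'
    refine abs_second_difference_le_of_abs_deriv2_le
      (fun t ht => Real.hasDerivAt_rpow_const (Or.inl (hpos t ht)))
      (fun t ht => (Real.hasDerivAt_rpow_const (Or.inl (hpos t ht))).const_mul α)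
      fun t ht => ?_
    rw [sub_sub, show (1 : ℝ) + 1 = 2 by norm_num, ← mul_assoc, abs_mul,
      abs_of_pos (Real.rpow_pos_of_pos (hy.trans_le ht.1) _)]
    exact mul_le_mul_of_nonneg_left (Real.rpow_le_rpow_of_nonpos hy ht.1 (by linarith))
      (abs_nonneg _)
  have hlim : Tendsto (fun y : ℝ => |α * (α - 1)| * y ^ (α - 2)) atTop (nhds 0) := by
    simpa [neg_sub] using (tendsto_rpow_neg_atTop (by linarith : 0 < 2 - α)).const_mul
      |α * (α - 1)|
  exact squeeze_zero_norm' hbound hlim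

theorem unitCov_eq_sub_sum_second_difference (N : ℕ) (a H : Fin N → ℝ) {n : ℕ} (hn : 1 ≤ n)
    (x : ℝ) :
    unitCov N a H x n =
      (∑ i, (a i) ^ 2 / 2 *
        (((n : ℝ) + 1) ^ (2 * H i) - 2 * (n : ℝ) ^ (2 * H i)
          + ((n : ℝ) - 1) ^ (2 * H i)))
      - ∑ i, (a i) ^ 2 / 2 *
        ((2 * x + n + 2) ^ (2 * H i) - 2 * (2 * x + n + 1) ^ (2 * H i)
          + (2 * x + n) ^ (2 * H i)) := by
  have hn₁ : (1 : ℝ) ≤ n := by exact_mod_cast hn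
  simp only [unitCov, mixedCov, subCov, ← Finset.sum_sub_distrib, ← Finset.sum_add_distrib]
  refine Finset.sum_congr rfl fun i _ => ?_
  rw [show x + n + 1 - (x + 1) = (n : ℝ) by ring, show x + n - (x + 1) = (n : ℝ) - 1 by ring,
    show x + n + 1 - x = (n : ℝ) + 1 by ring, show x + n - x = (n : ℝ) by ring,
    show x + 1 + (x + n + 1) = 2 * x + n + 2 by ring, show x + 1 + (x + n) = 2 * x + n + 1 by ring,
    show x + (x + n + 1) = 2 * x + n + 1 by ring, show x + (x + n) = 2 * x + n by ring,
    abs_of_nonneg (by linarith : (0 : ℝ) ≤ n), abs_of_nonneg (by linarith : (0 : ℝ) ≤ n - 1),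
    abs_of_nonneg (by linarith : (0 : ℝ) ≤ n + 1)]
  ring

/-- As `x → ∞` the unit-increment covariance of the msfBm converges to the stationary
increment covariance `R(0,n) = Σ_i (a_i²/2)[(n+1)^{2H_i} − 2n^{2H_i} + (n−1)^{2H_i}]`
of the mixed fractional Brownian motion. -/
theorem msfbm_unit_increment_covariance_limit (N : ℕ) (a H : Fin N → ℝ)
    (hH : ∀ i, H i ∈ Set.Ioo (0 : ℝ) 1) (n : ℕ) (hn : 1 ≤ n) :
    Tendsto (fun x : ℝ => unitCov N a H x n) atTop
      (nhds (∑ i, (a i) ^ 2 / 2 *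
        (((n : ℝ) + 1) ^ (2 * H i) - 2 * (n : ℝ) ^ (2 * H i)
          + ((n : ℝ) - 1) ^ (2 * H i)))) := by
  have hshift : Tendsto (fun x : ℝ => 2 * x + n) atTop atTop :=
    tendsto_atTop_add_const_right atTop _ (tendsto_id.const_mul_atTop two_pos)
  have hcorrection : Tendsto (fun x : ℝ => ∑ i, (a i) ^ 2 / 2 *
      ((2 * x + n + 2) ^ (2 * H i) - 2 * (2 * x + n + 1) ^ (2 * H i)
        + (2 * x + n) ^ (2 * H i))) atTop (nhds 0) := by
    simpa using tendsto_finsetSum Finset.univ fun i _ =>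
      ((tendsto_rpow_second_difference_atTop (by linarith [(hH i).2])).comp hshift).const_mul
        ((a i) ^ 2 / 2)
  simpa using (tendsto_const_nhds.sub hcorrection).congr fun x =>
    (unitCov_eq_sub_sum_second_difference N a H hn x).symm
end

section
/- Non-differentiability (variance blow-up): let a ∈ ℝ^N \ {0} and H ∈ (0,1)^N. For every t₀ ≥ 0, the scaled increment variance σ_n²(t₀) = f(t₀, t₀ + 1/n) satisfies lim_{n→∞} n² · σ_n²(t₀) = +∞. (This is the key estimate showing that with probability one the sample paths of the mixed sub-fractional Brownian motion are not differentiable at t₀.) -/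
/-!
Each summand of the increment variance is `a_i²` times the increment variance of a single
sub-fractional Brownian motion, `(2s+h)^α + h^α - 2^(α-1)(s^α + (s+h)^α)` with `α = 2H_i`.
This is at least `min(1, 2 - 2^(α-1)) h^α`: for `α ≤ 1` by concavity of `x ↦ x^α`, and for
`1 < α < 2` because it is increasing in `s` (concavity of `x ↦ x^(α-1)` again), so it dominates its
value `(2 - 2^(α-1)) h^α` at `s = 0`. Hence with `h = 1/n` and any `a_j ≠ 0`,
`n² f(t₀, t₀ + 1/n) ≥ c n^(2 - 2H_j) → ∞`.
-/

open Real Finset Filter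

lemma two_rpow_sub_one_mul_add_rpow_le {β x y : ℝ} (hβ₀ : 0 ≤ β) (hβ₁ : β ≤ 1)
    (hx : 0 ≤ x) (hy : 0 ≤ y) : (2 : ℝ) ^ (β - 1) * (x ^ β + y ^ β) ≤ (x + y) ^ β := by
  have hmid := (concaveOn_rpow hβ₀ hβ₁).2 (Set.mem_Ici.2 hx) (Set.mem_Ici.2 hy)
    (by norm_num : (0 : ℝ) ≤ 1 / 2) (by norm_num : (0 : ℝ) ≤ 1 / 2) (by norm_num)
  simp only [smul_eq_mul, ← mul_add] at hmid
  rw [mul_rpow (by norm_num) (by positivity), one_div, inv_rpow (by norm_num)] at hmid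
  rw [rpow_sub_one (by norm_num)]
  have h2β : (0 : ℝ) < 2 ^ β := by positivity
  calc 2 ^ β / 2 * (x ^ β + y ^ β) = 2 ^ β * (2⁻¹ * (x ^ β + y ^ β)) := by ring
    _ ≤ 2 ^ β * ((2 ^ β)⁻¹ * (x + y) ^ β) := by gcongr
    _ = (x + y) ^ β := by field_simp

/-- `subIncrement (2 * H) s h` is the variance of the increment of sub-fractional Brownian
motion of index `H` over `[s, s + h]`. -/
noncomputable def subIncrement (α s h : ℝ) : ℝ :=
  (2 * s + h) ^ α + h ^ α - 2 ^ (α - 1) * (s ^ α + (s + h) ^ α)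

lemma subCov_increment_eq {H s h : ℝ} (hH : 0 < H) (hs : 0 ≤ s) (hh : 0 ≤ h) :
    subCov H (s + h) (s + h) + subCov H s s - 2 * subCov H s (s + h)
      = subIncrement (2 * H) s h := by
  have h2H : 2 * H ≠ 0 := by positivity
  unfold subCov subIncrement
  rw [add_sub_cancel_left, abs_of_nonneg hh, sub_self, sub_self, abs_zero, zero_rpow h2H,
    ← two_mul (s + h), ← two_mul s, mul_rpow zero_le_two (by positivity),
    mul_rpow zero_le_two hs, rpow_sub_one two_ne_zero, ← add_assoc s s h, ← two_mul s]
  ring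

lemma rpow_le_subIncrement {α s h : ℝ} (hα₀ : 0 ≤ α) (hα₁ : α ≤ 1) (hs : 0 ≤ s)
    (hh : 0 ≤ h) : h ^ α ≤ subIncrement α s h := by
  have := two_rpow_sub_one_mul_add_rpow_le hα₀ hα₁ hs (add_nonneg hs hh)
  rw [← add_assoc, ← two_mul] at this
  unfold subIncrement
  linarith

lemma hasDerivAt_subIncrement {α h : ℝ} (hα : 1 ≤ α) (s : ℝ) :
    HasDerivAt (fun s => subIncrement α s h)
      (α * (2 * (2 * s + h) ^ (α - 1) - 2 ^ (α - 1) * (s ^ (α - 1) + (s + h) ^ (α - 1)))) s := by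
  have hlin : HasDerivAt (fun s : ℝ => 2 * s + h) 2 s := by
    simpa using ((hasDerivAt_id s).const_mul 2).add_const h
  have := ((((hasDerivAt_rpow_const (Or.inr hα)).comp s hlin).add_const (h ^ α)).sub
    (((hasDerivAt_rpow_const (Or.inr hα)).add
      ((hasDerivAt_rpow_const (Or.inr hα)).comp s ((hasDerivAt_id s).add_const h))).const_mul
      (2 ^ (α - 1))))
  exact this.congr_deriv (by simp only [id, mul_one]; ring)

lemma monotoneOn_subIncrement {α h : ℝ} (hα₁ : 1 ≤ α) (hα₂ : α ≤ 2) (hh : 0 ≤ h) :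
    MonotoneOn (fun s => subIncrement α s h) (Set.Ici 0) := by
  refine monotoneOn_of_deriv_nonneg (convex_Ici 0)
    (fun s _ => (hasDerivAt_subIncrement hα₁ s).continuousAt.continuousWithinAt)
    (fun s _ => (hasDerivAt_subIncrement hα₁ s).differentiableAt.differentiableWithinAt)
    fun s hs => ?_
  rw [interior_Ici, Set.mem_Ioi] at hs
  rw [(hasDerivAt_subIncrement hα₁ s).deriv]
  -- concavity of `x ↦ x ^ (α - 1)` makes the derivative nonnegative
  have hmean := two_rpow_sub_one_mul_add_rpow_le (β := α - 1) (by linarith) (by linarith)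
    hs.le (add_nonneg hs.le hh)
  rw [← add_assoc, ← two_mul, sub_sub, one_add_one_eq_two] at hmean
  have h2 : (2 : ℝ) ^ (α - 1) = 2 * 2 ^ (α - 2) := by
    rw [show α - 1 = α - 2 + 1 by ring, rpow_add_one two_ne_zero]; ring
  rw [h2]
  nlinarith

lemma subIncrement_zero_left {α : ℝ} (hα : α ≠ 0) (h : ℝ) :
    subIncrement α 0 h = (2 - 2 ^ (α - 1)) * h ^ α := by
  simp only [subIncrement, mul_zero, zero_add, zero_rpow hα]
  ring

lemma min_mul_rpow_le_subIncrement {α s h : ℝ} (hα₀ : 0 ≤ α) (hα₂ : α ≤ 2) (hs : 0 ≤ s)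
    (hh : 0 ≤ h) : min 1 (2 - (2 : ℝ) ^ (α - 1)) * h ^ α ≤ subIncrement α s h := by
  rcases le_or_gt α 1 with hα₁ | hα₁
  · calc min 1 (2 - (2 : ℝ) ^ (α - 1)) * h ^ α ≤ 1 * h ^ α := by gcongr; exact min_le_left _ _
      _ ≤ subIncrement α s h := by rw [one_mul]; exact rpow_le_subIncrement hα₀ hα₁ hs hh
  · calc min 1 (2 - (2 : ℝ) ^ (α - 1)) * h ^ α ≤ (2 - 2 ^ (α - 1)) * h ^ α := by
          gcongr; exact min_le_right _ _
      _ = subIncrement α 0 h := (subIncrement_zero_left (by positivity) h).symm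
      _ ≤ subIncrement α s h :=
          monotoneOn_subIncrement hα₁.le hα₂ hh Set.self_mem_Ici hs hs

lemma min_one_two_sub_two_rpow_pos {α : ℝ} (hα : α < 2) :
    0 < min 1 (2 - (2 : ℝ) ^ (α - 1)) := by
  have : (2 : ℝ) ^ (α - 1) < 2 := by
    simpa using rpow_lt_rpow_of_exponent_lt one_lt_two (by linarith : α - 1 < 1)
  exact lt_min one_pos (by linarith)

lemma incVar_add_eq_sum {N : ℕ} {a H : Fin N → ℝ} (hH : ∀ i, 0 < H i) {s h : ℝ} (hs : 0 ≤ s)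
    (hh : 0 ≤ h) : incVar N a H s (s + h) = ∑ i, a i ^ 2 * subIncrement (2 * H i) s h := by
  simp only [incVar, mixedCov, ← subCov_increment_eq (hH _) hs hh, mul_sum,
    ← sum_add_distrib, ← sum_sub_distrib]
  exact sum_congr rfl fun i _ => by ring

lemma sq_mul_min_mul_rpow_le_incVar {N : ℕ} {a H : Fin N → ℝ}
    (hH : ∀ i, H i ∈ Set.Ioo (0 : ℝ) 1) {s h : ℝ} (hs : 0 ≤ s) (hh : 0 ≤ h) (j : Fin N) :
    a j ^ 2 * (min 1 (2 - (2 : ℝ) ^ (2 * H j - 1)) * h ^ (2 * H j))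
      ≤ incVar N a H s (s + h) := by
  have hlow (i : Fin N) :
      min 1 (2 - (2 : ℝ) ^ (2 * H i - 1)) * h ^ (2 * H i) ≤ subIncrement (2 * H i) s h :=
    min_mul_rpow_le_subIncrement (by linarith [(hH i).1]) (by linarith [(hH i).2]) hs hh
  have hnonneg (i : Fin N) : 0 ≤ a i ^ 2 * subIncrement (2 * H i) s h :=
    mul_nonneg (sq_nonneg _) <| (mul_nonneg
      (min_one_two_sub_two_rpow_pos (by linarith [(hH i).2])).le (rpow_nonneg hh _)).trans
      (hlow i)
  rw [incVar_add_eq_sum (fun i => (hH i).1) hs hh]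
  exact (mul_le_mul_of_nonneg_left (hlow j) (sq_nonneg _)).trans
    (single_le_sum (fun i _ => hnonneg i) (mem_univ j))

/-- Non-differentiability (variance blow-up): for every `t₀ ≥ 0`, with
`σ_n²(t₀) = E(S^H(t₀+1/n) − S^H(t₀))²`, one has `n² σ_n²(t₀) → +∞`. -/
theorem msfbm_variance_blow_up (N : ℕ) (a H : Fin N → ℝ)
    (hH : ∀ i, H i ∈ Set.Ioo (0 : ℝ) 1) (ha : a ≠ 0)
    (t₀ : ℝ) (ht₀ : 0 ≤ t₀) :
    Tendsto (fun n : ℕ => (n : ℝ) ^ 2 * incVar N a H t₀ (t₀ + 1 / n))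
      atTop atTop := by
  obtain ⟨j, hj⟩ := Function.ne_iff.mp ha
  set γ := min 1 (2 - (2 : ℝ) ^ (2 * H j - 1))
  have hc : 0 < a j ^ 2 * γ :=
    mul_pos (sq_pos_of_ne_zero hj) (min_one_two_sub_two_rpow_pos (by linarith [(hH j).2]))
  have hlim : Tendsto (fun n : ℕ => a j ^ 2 * γ * (n : ℝ) ^ (2 - 2 * H j)) atTop atTop :=
    ((tendsto_rpow_atTop (by linarith [(hH j).2])).comp
      tendsto_natCast_atTop_atTop).const_mul_atTop hc
  refine tendsto_atTop_mono' _ ?_ hlim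
  filter_upwards [eventually_gt_atTop 0] with n hn
  have hn' : (0 : ℝ) < n := Nat.cast_pos.2 hn
  calc a j ^ 2 * γ * (n : ℝ) ^ (2 - 2 * H j)
      = (n : ℝ) ^ 2 * (a j ^ 2 * (γ * (1 / n) ^ (2 * H j))) := by
        rw [rpow_sub hn', one_div, inv_rpow hn'.le, rpow_two]
        field_simp
    _ ≤ (n : ℝ) ^ 2 * incVar N a H t₀ (t₀ + 1 / n) := by
        gcongr
        exact sq_mul_min_mul_rpow_le_incVar hH ht₀ (by positivity) j
end

section
/- Gaussian small-ball-type integral bound: let σ > 0, d > 0, and u > 1. If μ is the centered Gaussian measure on ℝ with variance σ², then ∫_ℝ (d + |x|)^{−u} dμ(x) ≤ √(2/π) · (u/(u−1)) · d^{1−u} · σ^{−1}. (With d = |t−s| and σ² = E(S_t − S_s)², this gives E((|s−t| + |S_t^H(a) − S_s^H(a)|)^{−u}) ≤ c |t−s|^{1−u} σ(s,t)^{−1} with c = √(2/π)·u/(u−1).) -/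
open Real MeasureTheory ProbabilityTheory

/-! The Gaussian density is at most `(σ √(2π))⁻¹`, so the integral is at most
`(σ √(2π))⁻¹ ∫ (d + |x|)^(-u) dx = (σ √(2π))⁻¹ · 2 d^(1-u) / (u - 1)`, and `1 ≤ u`. -/

open Set NNReal Filter Topology

lemma integrable_comp_abs_of_integrableOn_Ioi {E : Type*} [NormedAddCommGroup E] {f : ℝ → E}
    (hf : IntegrableOn f (Ioi 0)) : Integrable fun x ↦ f |x| := by
  have h_Ioi : IntegrableOn (fun x ↦ f |x|) (Ioi 0) :=
    hf.congr_fun (fun x hx ↦ by rw [abs_of_pos hx]) measurableSet_Ioi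
  have h_Iic : IntegrableOn (fun x ↦ f |x|) (Iic 0) := by
    have h_neg : MeasurableEmbedding fun x : ℝ ↦ -x := (Homeomorph.neg ℝ).measurableEmbedding
    rw [← Measure.map_neg_eq_self (volume : Measure ℝ), h_neg.integrableOn_map_iff]
    simp_rw [Function.comp_def, abs_neg, neg_preimage, neg_Iic, neg_zero]
    exact (integrableOn_Ici_iff_integrableOn_Ioi).mpr h_Ioi
  simpa [Iic_union_Ioi] using h_Iic.union h_Ioi

lemma gaussianPDFReal_le (μ : ℝ) (v : ℝ≥0) (x : ℝ) :
    gaussianPDFReal μ v x ≤ (√(2 * π * v))⁻¹ := by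
  rw [gaussianPDFReal]
  refine mul_le_of_le_one_right (by positivity) (exp_le_one_iff.mpr ?_)
  exact div_nonpos_of_nonpos_of_nonneg (neg_nonpos.mpr (sq_nonneg _)) (by positivity)

lemma gaussianReal_le_smul_volume (μ : ℝ) {v : ℝ≥0} (hv : v ≠ 0) :
    gaussianReal μ v ≤ ENNReal.ofReal (√(2 * π * v))⁻¹ • volume := by
  rw [gaussianReal_of_var_ne_zero μ hv, ← withDensity_const]
  exact withDensity_mono (ae_of_all _ fun x ↦ ENNReal.ofReal_le_ofReal (gaussianPDFReal_le μ v x))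

lemma integral_gaussianReal_le_of_nonneg {f : ℝ → ℝ} (μ : ℝ) {v : ℝ≥0} (hv : v ≠ 0) (hf : 0 ≤ f)
    (hfi : Integrable f) : ∫ x, f x ∂gaussianReal μ v ≤ (√(2 * π * v))⁻¹ * ∫ x, f x := by
  calc ∫ x, f x ∂gaussianReal μ v
      ≤ ∫ x, f x ∂(ENNReal.ofReal (√(2 * π * v))⁻¹ • volume) :=
        integral_mono_measure (gaussianReal_le_smul_volume μ hv) (ae_of_all _ hf)
          (hfi.smul_measure ENNReal.ofReal_ne_top)
    _ = (√(2 * π * v))⁻¹ * ∫ x, f x := by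
        rw [integral_smul_measure, ENNReal.toReal_ofReal (by positivity), smul_eq_mul]

lemma integral_Ioi_add_rpow_of_lt {a c m : ℝ} (ha : a < -1) (hc : -m < c) :
    ∫ x in Ioi c, (x + m) ^ a = -(c + m) ^ (a + 1) / (a + 1) := by
  have h_deriv : ∀ x ∈ Ici c,
      HasDerivAt (fun t ↦ (t + m) ^ (a + 1) / (a + 1)) ((x + m) ^ a) x := by
    intro x hx
    have h := (((hasDerivAt_id' x).add_const m).rpow_const (p := a + 1)
      (Or.inl (by linarith [mem_Ici.mp hx]))).div_const (a + 1)
    rwa [one_mul, add_sub_cancel_right, mul_div_cancel_left₀ _ (by linarith)] at h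
  have h_lim : Tendsto (fun t ↦ (t + m) ^ (a + 1) / (a + 1)) atTop (𝓝 (0 / (a + 1))) := by
    refine Tendsto.div_const ?_ _
    rw [← neg_neg (a + 1)]
    exact (tendsto_rpow_neg_atTop (by linarith)).comp (tendsto_atTop_add_const_right _ m tendsto_id)
  rw [integral_Ioi_of_hasDerivAt_of_tendsto' h_deriv (integrableOn_add_rpow_Ioi_of_lt ha hc) h_lim]
  ring

lemma integral_rpow_neg_add_abs {d u : ℝ} (hd : 0 < d) (hu : 1 < u) :
    ∫ x, (d + |x|) ^ (-u) = 2 * d ^ (1 - u) / (u - 1) := by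
  rw [integral_comp_abs (f := fun x ↦ (d + x) ^ (-u))]
  simp_rw [add_comm d]
  rw [integral_Ioi_add_rpow_of_lt (by linarith) (by linarith), zero_add,
    show -u + 1 = -(u - 1) by ring, show (1 : ℝ) - u = -(u - 1) by ring]
  field_simp

lemma integrable_rpow_neg_add_abs {d u : ℝ} (hd : 0 < d) (hu : 1 < u) :
    Integrable fun x ↦ (d + |x|) ^ (-u) := by
  refine integrable_comp_abs_of_integrableOn_Ioi (f := fun x ↦ (d + x) ^ (-u)) ?_
  simp_rw [add_comm d]
  exact integrableOn_add_rpow_Ioi_of_lt (by linarith) (by linarith)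

lemma two_mul_inv_sqrt_two_pi_mul_sq {σ : ℝ} (hσ : 0 < σ) :
    2 * (√(2 * π * σ ^ 2))⁻¹ = √(2 / π) * σ⁻¹ := by
  have h2 : (0 : ℝ) < √2 := by positivity
  have hπ : (0 : ℝ) < √π := by positivity
  rw [sqrt_mul (by positivity), sqrt_mul zero_le_two, sqrt_sq hσ.le, sqrt_div zero_le_two]
  field_simp
  rw [sq_sqrt zero_le_two]

/-- Gaussian small-ball-type integral bound: if `μ` is the centered Gaussian measure on `ℝ`
with variance `σ² > 0`, `d > 0` and `u > 1`, then
`∫ (d + |x|)^{−u} dμ(x) ≤ √(2/π)·(u/(u−1))·d^{1−u}·σ⁻¹`. -/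
theorem gaussian_small_ball_integral_bound (σ d u : ℝ)
    (hσ : 0 < σ) (hd : 0 < d) (hu : 1 < u) :
    ∫ x, (d + |x|) ^ (-u) ∂(gaussianReal 0 ⟨σ ^ 2, sq_nonneg σ⟩)
      ≤ Real.sqrt (2 / π) * (u / (u - 1)) * d ^ (1 - u) * σ⁻¹ := by
  have hv : (⟨σ ^ 2, sq_nonneg σ⟩ : ℝ≥0) ≠ 0 := NNReal.coe_ne_zero.mp (pow_pos hσ 2).ne'
  calc ∫ x, (d + |x|) ^ (-u) ∂(gaussianReal 0 ⟨σ ^ 2, sq_nonneg σ⟩)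
      ≤ (√(2 * π * σ ^ 2))⁻¹ * ∫ x, (d + |x|) ^ (-u) :=
        integral_gaussianReal_le_of_nonneg 0 hv (fun x ↦ by positivity)
          (integrable_rpow_neg_add_abs hd hu)
    _ = √(2 / π) * (1 / (u - 1)) * d ^ (1 - u) * σ⁻¹ := by
        rw [integral_rpow_neg_add_abs hd hu]
        linear_combination d ^ (1 - u) / (u - 1) * two_mul_inv_sqrt_two_pi_mul_sq hσ
    _ ≤ √(2 / π) * (u / (u - 1)) * d ^ (1 - u) * σ⁻¹ := by
        gcongr
end

section
/- Local nondeterminism of the mixed sub-fractional Brownian motion: let a ∈ ℝ^N \ {0}, let H_{i₀} = min{H_i : a_i ≠ 0}, and let T > 0. There exists a constant c > 0 such that for all 0 ≤ s ≤ t ≤ T, inf_{b ∈ ℝ} ( C(t,t) − 2b·C(s,t) + b²·C(s,s) ) ≥ c (t−s)^{2H_{i₀}}. (The left-hand side equals the conditional variance Var(S^H(t) | S^H(s)) of the centered Gaussian process with covariance C.) -/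
open Real Finset

/-!
Sub-fractional Brownian motion is, up to a constant, `B(t) + B(-t)` for a two-sided fractional
Brownian motion `B`, and `B` has the Mandelbrot–van Ness representation `B(u) = ∫ K_u dW` with
`K_u(x) = (u - x)₊^(H - 1/2) - (-x)₊^(H - 1/2)`. Hence
`c_H(t,t) - 2b c_H(s,t) + b² c_H(s,s)` is a fixed positive multiple of
`‖(K_t + K_{-t}) - b (K_s + K_{-s})‖²` in `L²(ℝ)`. For `0 ≤ s < x < t` every kernel in that
combination except `K_t` vanishes, so the norm is at least
`∫_s^t (t - x)^(2H - 1) dx = (t - s)^(2H) / (2H)`, whatever `b` is. The mixed form is a sum of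
these nonnegative forms weighted by `a_i²`, and the term `i₀` alone gives the bound.
-/

open MeasureTheory Set

theorem sq_rpow {y : ℝ} (hy : 0 ≤ y) (r : ℝ) : (y ^ r) ^ 2 = y ^ (2 * r) := by
  rw [← rpow_mul_natCast hy, mul_comm]; norm_num

theorem sq_ite_rpow_le (p : Prop) [Decidable p] {y : ℝ} (hy : 0 ≤ y) (r : ℝ) :
    (if p then y ^ r else 0) ^ 2 ≤ y ^ (2 * r) := by
  split_ifs
  · rw [sq_rpow hy]
  · simpa using rpow_nonneg hy _

theorem abs_rpow_add_one_sub_rpow_le {β y : ℝ} (hβ : β ≤ 1) (hy : 0 < y) :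
    |(y + 1) ^ β - y ^ β| ≤ |β| * y ^ (β - 1) := by
  obtain ⟨c, ⟨hyc, -⟩, hc⟩ := exists_hasDerivAt_eq_slope (fun x => x ^ β)
    (fun x => β * x ^ (β - 1)) (lt_add_one y)
    (continuousOn_id.rpow_const fun x hx => Or.inl (hy.trans_le hx.1).ne')
    (fun x hx => Real.hasDerivAt_rpow_const (Or.inl (hy.trans hx.1).ne'))
  rw [add_sub_cancel_left, div_one] at hc
  rw [← hc, abs_mul, abs_of_nonneg (rpow_nonneg (by linarith) _)]
  exact mul_le_mul_of_nonneg_left (rpow_le_rpow_of_nonpos hy hyc.le (by linarith)) (abs_nonneg β)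

theorem integrableOn_Icc_sub_rpow {r : ℝ} (hr : -1 < r) (c : ℝ) {a b : ℝ} (hab : a ≤ b) :
    IntegrableOn (fun x => (c - x) ^ r) (Icc a b) :=
  (intervalIntegrable_iff_integrableOn_Icc_of_le hab).1 <| by
    simpa using
      (intervalIntegral.intervalIntegrable_rpow' hr (a := c - a) (b := c - b)).comp_sub_left c

/-- The cut-offs are `if`s rather than `max (u - x) 0`: as `0 ^ 0 = 1`, the latter would vanish
identically at `H = 1/2`, where the kernel should be the indicator of `[0, u)`. -/
noncomputable def fbmKernel (H u x : ℝ) : ℝ :=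
  (if x < u then (u - x) ^ (H - 1 / 2) else 0) - (if x < 0 then (-x) ^ (H - 1 / 2) else 0)

noncomputable def fbmKernelConst (H : ℝ) : ℝ := ∫ x, fbmKernel H 1 x ^ 2

noncomputable def subFbmKernel (H t x : ℝ) : ℝ := fbmKernel H t x + fbmKernel H (-t) x

section fbmKernel

variable {H : ℝ}

theorem measurable_fbmKernel (H u : ℝ) : Measurable (fbmKernel H u) := by
  refine Measurable.sub ?_ ?_ <;>
    exact Measurable.ite (measurableSet_lt measurable_id measurable_const) (by fun_prop)
      measurable_const

@[simp]
theorem fbmKernel_zero_left (H x : ℝ) : fbmKernel H 0 x = 0 := by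
  simp [fbmKernel]

theorem fbmKernel_eq_zero_of_le {u x : ℝ} (hu : u ≤ x) (hx : 0 ≤ x) :
    fbmKernel H u x = 0 := by
  simp [fbmKernel, hu.not_gt, hx.not_gt]

theorem fbmKernel_sub_fbmKernel (H u v x : ℝ) :
    fbmKernel H u x - fbmKernel H v x = fbmKernel H (u - v) (x - v) := by
  simp only [fbmKernel, sub_lt_sub_iff_right, sub_neg, sub_sub_sub_cancel_right, neg_sub]

theorem fbmKernel_neg (H u x : ℝ) : fbmKernel H (-u) x = -fbmKernel H u (x + u) := by
  simpa using (fbmKernel_sub_fbmKernel H 0 u (x + u)).symm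

theorem fbmKernel_mul_mul (H : ℝ) {c : ℝ} (hc : 0 < c) (u x : ℝ) :
    fbmKernel H (c * u) (c * x) = c ^ (H - 1 / 2) * fbmKernel H u x := by
  have hcx : c * x < 0 ↔ x < 0 := by simpa using mul_lt_mul_iff_of_pos_left (c := 0) hc
  have hpow : ∀ y, 0 ≤ y → (c * y) ^ (H - 1 / 2) = c ^ (H - 1 / 2) * y ^ (H - 1 / 2) :=
    fun y hy => mul_rpow hc.le hy
  simp only [fbmKernel, mul_lt_mul_iff_of_pos_left hc, hcx]
  rw [← mul_sub, ← mul_neg]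
  split_ifs with h₁ h₂ h₂
  · rw [hpow _ (by linarith), hpow _ (by linarith)]; ring
  · rw [hpow _ (by linarith)]; ring
  · rw [hpow _ (by linarith)]; ring
  · ring

theorem integrableOn_Iio_sq_fbmKernel_one (hH1 : H < 1) :
    IntegrableOn (fun x => fbmKernel H 1 x ^ 2) (Iio (-1)) := by
  have hpow : IntegrableOn (fun y : ℝ => y ^ (2 * H - 3)) (Ioi (-(-1))) := by
    rw [neg_neg]; exact integrableOn_Ioi_rpow_of_lt (by linarith) one_pos
  refine Integrable.mono' (hpow.comp_neg_Iio.const_mul ((H - 1 / 2) ^ 2))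
    ((measurable_fbmKernel H 1).pow_const 2).aestronglyMeasurable.restrict
    (ae_restrict_of_forall_mem measurableSet_Iio fun x hx => ?_)
  have hx' : x < -1 := hx
  have hK : fbmKernel H 1 x = (-x + 1) ^ (H - 1 / 2) - (-x) ^ (H - 1 / 2) := by
    simp [fbmKernel, show x < 1 by linarith, show x < 0 by linarith, neg_add_eq_sub]
  have hbound := abs_rpow_add_one_sub_rpow_le (β := H - 1 / 2) (by linarith)
    (by linarith : (0 : ℝ) < -x)
  rw [Real.norm_eq_abs, abs_of_nonneg (sq_nonneg _), hK, ← sq_abs]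
  calc _ ≤ (|H - 1 / 2| * (-x) ^ (H - 1 / 2 - 1)) ^ 2 :=
        pow_le_pow_left₀ (abs_nonneg _) hbound 2
    _ = (H - 1 / 2) ^ 2 * (-x) ^ (2 * H - 3) := by
      rw [mul_pow, sq_abs, sq_rpow (by linarith)]; ring_nf

theorem integrableOn_Icc_sq_fbmKernel_one (hH0 : 0 < H) :
    IntegrableOn (fun x => fbmKernel H 1 x ^ 2) (Icc (-1) 1) := by
  have hmeas := ((measurable_fbmKernel H 1).pow_const 2).aestronglyMeasurable (μ := volume)
  have hr : -1 < 2 * H - 1 := by linarith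
  have left : IntegrableOn (fun x => fbmKernel H 1 x ^ 2) (Icc (-1) 0) := by
    have hneg : IntegrableOn (fun x => (-x) ^ (2 * H - 1)) (Icc (-1 : ℝ) 0) := by
      simpa using integrableOn_Icc_sub_rpow hr 0 (by norm_num : (-1 : ℝ) ≤ 0)
    refine Integrable.mono' (((integrableOn_Icc_sub_rpow hr 1 (by norm_num)).const_mul 2).add
      (hneg.const_mul 2)) hmeas.restrict
      (ae_restrict_of_forall_mem measurableSet_Icc fun x hx => ?_)
    have h₁ := sq_ite_rpow_le (x < 1) (by linarith [hx.2] : 0 ≤ 1 - x) (H - 1 / 2)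
    have h₂ := sq_ite_rpow_le (x < 0) (by linarith [hx.2] : 0 ≤ -x) (H - 1 / 2)
    rw [show 2 * (H - 1 / 2) = 2 * H - 1 by ring] at h₁ h₂
    rw [Pi.add_apply, Real.norm_eq_abs, abs_of_nonneg (sq_nonneg _), fbmKernel]
    set A := if x < 1 then (1 - x) ^ (H - 1 / 2) else 0
    set B := if x < 0 then (-x) ^ (H - 1 / 2) else 0
    nlinarith [sq_nonneg (A + B)]
  have right : IntegrableOn (fun x => fbmKernel H 1 x ^ 2) (Icc 0 1) := by
    refine (integrableOn_Icc_sub_rpow hr 1 zero_le_one).mono' hmeas.restrict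
      (ae_restrict_of_forall_mem measurableSet_Icc fun x hx => ?_)
    rw [Real.norm_eq_abs, abs_of_nonneg (sq_nonneg _)]
    simpa [fbmKernel, hx.1.not_gt, mul_sub] using
      sq_ite_rpow_le (x < 1) (by linarith [hx.2] : 0 ≤ 1 - x) (H - 1 / 2)
  rw [← Icc_union_Icc_eq_Icc (by norm_num : (-1 : ℝ) ≤ 0) zero_le_one]
  exact left.union right

theorem integrable_sq_fbmKernel_one (hH0 : 0 < H) (hH1 : H < 1) :
    Integrable (fun x => fbmKernel H 1 x ^ 2) := by
  have hIoi : IntegrableOn (fun x => fbmKernel H 1 x ^ 2) (Ioi 1) :=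
    integrableOn_zero.congr_fun (fun x hx => by
      simp [fbmKernel_eq_zero_of_le (le_of_lt hx) (by linarith [mem_Ioi.1 hx])]) measurableSet_Ioi
  have hcover : Iio (-1 : ℝ) ∪ Icc (-1) 1 ∪ Ioi 1 = Set.univ := by
    rw [Set.union_assoc, Icc_union_Ioi_eq_Ici (by norm_num), Iio_union_Ici]
  rw [← integrableOn_univ, ← hcover]
  exact ((integrableOn_Iio_sq_fbmKernel_one hH1).union
    (integrableOn_Icc_sq_fbmKernel_one hH0)).union hIoi

theorem sq_fbmKernel_of_pos (H : ℝ) {u : ℝ} (hu : 0 < u) (x : ℝ) :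
    fbmKernel H u x ^ 2 = u ^ (2 * H - 1) * fbmKernel H 1 (u⁻¹ * x) ^ 2 := by
  have h := fbmKernel_mul_mul H hu 1 (u⁻¹ * x)
  rw [mul_one, mul_inv_cancel_left₀ hu.ne'] at h
  rw [h, mul_pow, sq_rpow hu.le]
  ring_nf

theorem sq_fbmKernel_neg (H u x : ℝ) : fbmKernel H (-u) x ^ 2 = fbmKernel H u (x + u) ^ 2 := by
  rw [fbmKernel_neg, neg_sq]

theorem integrable_sq_fbmKernel (hH0 : 0 < H) (hH1 : H < 1) (u : ℝ) :
    Integrable (fun x => fbmKernel H u x ^ 2) := by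
  have hpos : ∀ {u : ℝ}, 0 < u → Integrable (fun x => fbmKernel H u x ^ 2) := fun {u} hu => by
    have h : Integrable (fun x => fbmKernel H 1 (u⁻¹ * x) ^ 2) :=
      (integrable_comp_mul_left_iff (fun x => fbmKernel H 1 x ^ 2) (inv_ne_zero hu.ne')).2
        (integrable_sq_fbmKernel_one hH0 hH1)
    simp_rw [sq_fbmKernel_of_pos H hu]
    exact h.const_mul _
  rcases lt_trichotomy u 0 with hu | rfl | hu
  · obtain ⟨v, hv, rfl⟩ : ∃ v, 0 < v ∧ u = -v := ⟨-u, by linarith, by ring⟩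
    simp_rw [sq_fbmKernel_neg]
    exact (hpos hv).comp_add_right v
  · simp
  · exact hpos hu

theorem integral_sq_fbmKernel (hH0 : 0 < H) (u : ℝ) :
    ∫ x, fbmKernel H u x ^ 2 = |u| ^ (2 * H) * fbmKernelConst H := by
  have hpos : ∀ {u : ℝ}, 0 < u →
      ∫ x, fbmKernel H u x ^ 2 = u ^ (2 * H) * fbmKernelConst H := fun {u} hu => by
      simp_rw [sq_fbmKernel_of_pos H hu]
      rw [integral_const_mul, Measure.integral_comp_mul_left (fun x => fbmKernel H 1 x ^ 2),
        inv_inv, abs_of_pos hu, smul_eq_mul, ← mul_assoc, ← rpow_add_one hu.ne', fbmKernelConst]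
      ring_nf
  rcases lt_trichotomy u 0 with hu | rfl | hu
  · obtain ⟨v, hv, rfl⟩ : ∃ v, 0 < v ∧ u = -v := ⟨-u, by linarith, by ring⟩
    simp_rw [sq_fbmKernel_neg]
    rw [integral_add_right_eq_self (fun x => fbmKernel H v x ^ 2), hpos hv, abs_neg,
      abs_of_pos hv]
  · simp [zero_rpow (by positivity : 2 * H ≠ 0)]
  · rw [hpos hu, abs_of_pos hu]

theorem fbmKernel_mul_fbmKernel (H u v x : ℝ) :
    fbmKernel H u x * fbmKernel H v x =
      (fbmKernel H u x ^ 2 + fbmKernel H v x ^ 2 - fbmKernel H (u - v) (x - v) ^ 2) / 2 := by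
  rw [← fbmKernel_sub_fbmKernel]; ring

theorem integrable_fbmKernel_mul (hH0 : 0 < H) (hH1 : H < 1) (u v : ℝ) :
    Integrable (fun x => fbmKernel H u x * fbmKernel H v x) := by
  simp_rw [fbmKernel_mul_fbmKernel H u v]
  exact (((integrable_sq_fbmKernel hH0 hH1 u).add (integrable_sq_fbmKernel hH0 hH1 v)).sub
    ((integrable_sq_fbmKernel hH0 hH1 (u - v)).comp_sub_right v)).div_const 2

theorem integral_fbmKernel_mul (hH0 : 0 < H) (hH1 : H < 1) (u v : ℝ) :
    ∫ x, fbmKernel H u x * fbmKernel H v x =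
      fbmKernelConst H / 2 * (|u| ^ (2 * H) + |v| ^ (2 * H) - |u - v| ^ (2 * H)) := by
  have hu := integrable_sq_fbmKernel hH0 hH1 u
  have hv := integrable_sq_fbmKernel hH0 hH1 v
  have huv := (integrable_sq_fbmKernel hH0 hH1 (u - v)).comp_sub_right v
  simp_rw [fbmKernel_mul_fbmKernel H u v]
  rw [integral_div, integral_sub (by exact hu.add hv) huv, integral_add hu hv,
    integral_sub_right_eq_self (fun x => fbmKernel H (u - v) x ^ 2), integral_sq_fbmKernel hH0,
    integral_sq_fbmKernel hH0, integral_sq_fbmKernel hH0]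
  ring

theorem setIntegral_Ioo_sq_fbmKernel (hH0 : 0 < H) {s t : ℝ} (hs : 0 ≤ s) (hst : s ≤ t) :
    ∫ x in Ioo s t, fbmKernel H t x ^ 2 = (t - s) ^ (2 * H) / (2 * H) := by
  have hK : EqOn (fun x => fbmKernel H t x ^ 2) (fun x => (t - x) ^ (2 * H - 1)) (Ioo s t) :=
    fun x hx => by
      simp only [fbmKernel, if_pos hx.2, if_neg (hs.trans_lt hx.1).not_gt, sub_zero]
      rw [sq_rpow (sub_nonneg.2 hx.2.le)]; ring_nf
  rw [setIntegral_congr_fun measurableSet_Ioo hK, ← integral_Ioc_eq_integral_Ioo,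
    ← intervalIntegral.integral_of_le hst, intervalIntegral.integral_comp_sub_left
      (fun x => x ^ (2 * H - 1)), sub_self, integral_rpow (Or.inl (by linarith)),
    zero_rpow (by linarith)]
  ring_nf

theorem fbmKernelConst_pos (hH0 : 0 < H) (hH1 : H < 1) : 0 < fbmKernelConst H := by
  have h := setIntegral_le_integral (s := Ioo 0 1) (integrable_sq_fbmKernel_one hH0 hH1)
    (ae_of_all _ fun x => sq_nonneg (fbmKernel H 1 x))
  rw [setIntegral_Ioo_sq_fbmKernel hH0 le_rfl zero_le_one, sub_zero, one_rpow] at h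
  exact (by positivity : (0 : ℝ) < 1 / (2 * H)).trans_le h

theorem subFbmKernel_mul_subFbmKernel (H s t x : ℝ) :
    subFbmKernel H s x * subFbmKernel H t x =
      fbmKernel H s x * fbmKernel H t x + fbmKernel H s x * fbmKernel H (-t) x +
        (fbmKernel H (-s) x * fbmKernel H t x + fbmKernel H (-s) x * fbmKernel H (-t) x) := by
  rw [subFbmKernel, subFbmKernel]; ring

theorem integrable_subFbmKernel_mul (hH0 : 0 < H) (hH1 : H < 1) (s t : ℝ) :
    Integrable (fun x => subFbmKernel H s x * subFbmKernel H t x) := by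
  have I := integrable_fbmKernel_mul hH0 hH1
  simp_rw [subFbmKernel_mul_subFbmKernel]
  exact ((I s t).add (I s (-t))).add ((I (-s) t).add (I (-s) (-t)))

theorem integral_subFbmKernel_mul (hH0 : 0 < H) (hH1 : H < 1) {s t : ℝ} (hs : 0 ≤ s)
    (ht : 0 ≤ t) :
    ∫ x, subFbmKernel H s x * subFbmKernel H t x = 2 * fbmKernelConst H * subCov H s t := by
  have I := integrable_fbmKernel_mul hH0 hH1
  simp_rw [subFbmKernel_mul_subFbmKernel]
  rw [integral_add (by exact (I s t).add (I s (-t))) (by exact (I (-s) t).add (I (-s) (-t))),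
    integral_add (I s t) (I s (-t)), integral_add (I (-s) t) (I (-s) (-t))]
  simp only [integral_fbmKernel_mul hH0 hH1, abs_neg, sub_neg_eq_add, neg_add_eq_sub,
    show -s - t = -(s + t) by ring, abs_sub_comm s t, abs_of_nonneg hs, abs_of_nonneg ht,
    abs_of_nonneg (add_nonneg hs ht), subCov]
  ring

theorem integrable_sq_subFbmKernel_sub (hH0 : 0 < H) (hH1 : H < 1) (s t b : ℝ) :
    Integrable (fun x => (subFbmKernel H t x - b * subFbmKernel H s x) ^ 2) := by
  have I := integrable_subFbmKernel_mul hH0 hH1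
  refine (((I t t).sub ((I s t).const_mul (2 * b))).add ((I s s).const_mul (b ^ 2))).congr
    (ae_of_all _ fun x => ?_)
  simp only [Pi.add_apply, Pi.sub_apply]
  ring

theorem integral_sq_subFbmKernel_sub (hH0 : 0 < H) (hH1 : H < 1) {s t : ℝ} (hs : 0 ≤ s)
    (ht : 0 ≤ t) (b : ℝ) :
    ∫ x, (subFbmKernel H t x - b * subFbmKernel H s x) ^ 2 =
      2 * fbmKernelConst H * (subCov H t t - 2 * b * subCov H s t + b ^ 2 * subCov H s s) := by
  have I := integrable_subFbmKernel_mul hH0 hH1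
  have hexp : ∀ x, (subFbmKernel H t x - b * subFbmKernel H s x) ^ 2 =
      subFbmKernel H t x * subFbmKernel H t x - 2 * b * (subFbmKernel H s x * subFbmKernel H t x)
        + b ^ 2 * (subFbmKernel H s x * subFbmKernel H s x) := fun x => by ring
  simp_rw [hexp]
  rw [integral_add (by exact (I t t).sub ((I s t).const_mul _)) ((I s s).const_mul _),
    integral_sub (I t t) ((I s t).const_mul _), integral_const_mul, integral_const_mul,
    integral_subFbmKernel_mul hH0 hH1 ht ht, integral_subFbmKernel_mul hH0 hH1 hs ht,
    integral_subFbmKernel_mul hH0 hH1 hs hs]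
  ring

theorem subFbmKernel_sub_mul_eq_fbmKernel {s t x : ℝ} (hs : 0 ≤ s) (hx : x ∈ Ioo s t)
    (b : ℝ) :
    subFbmKernel H t x - b * subFbmKernel H s x = fbmKernel H t x := by
  have hx0 : 0 ≤ x := hs.trans hx.1.le
  simp only [subFbmKernel, fbmKernel_eq_zero_of_le (by linarith [hx.1, hx.2] : -t ≤ x) hx0,
    fbmKernel_eq_zero_of_le hx.1.le hx0, fbmKernel_eq_zero_of_le (by linarith : -s ≤ x) hx0]
  ring

theorem subCov_local_nondeterminism (hH0 : 0 < H) (hH1 : H < 1) :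
    ∃ k > 0, ∀ s t b : ℝ, 0 ≤ s → s ≤ t →
      k * (t - s) ^ (2 * H) ≤ subCov H t t - 2 * b * subCov H s t + b ^ 2 * subCov H s s := by
  have hC := fbmKernelConst_pos hH0 hH1
  refine ⟨(4 * H * fbmKernelConst H)⁻¹, by positivity, fun s t b hs hst => ?_⟩
  have hF : ∀ x ∈ Ioo s t,
      (subFbmKernel H t x - b * subFbmKernel H s x) ^ 2 = fbmKernel H t x ^ 2 :=
    fun x hx => by rw [subFbmKernel_sub_mul_eq_fbmKernel hs hx]
  have hle := setIntegral_le_integral (s := Ioo s t)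
    (integrable_sq_subFbmKernel_sub hH0 hH1 s t b)
    (ae_of_all _ fun x => sq_nonneg (subFbmKernel H t x - b * subFbmKernel H s x))
  rw [setIntegral_congr_fun measurableSet_Ioo hF, setIntegral_Ioo_sq_fbmKernel hH0 hs hst,
    integral_sq_subFbmKernel_sub hH0 hH1 hs (hs.trans hst)] at hle
  rw [inv_mul_eq_div, div_le_iff₀ (by positivity)]
  rw [div_le_iff₀ (by positivity)] at hle
  linarith

end fbmKernel

theorem mixedCov_quadratic_eq_sum (N : ℕ) (a H : Fin N → ℝ) (s t b : ℝ) :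
    mixedCov N a H t t - 2 * b * mixedCov N a H s t + b ^ 2 * mixedCov N a H s s =
      ∑ i, a i ^ 2 *
        (subCov (H i) t t - 2 * b * subCov (H i) s t + b ^ 2 * subCov (H i) s s) := by
  simp only [mixedCov, Finset.mul_sum, ← Finset.sum_sub_distrib, ← Finset.sum_add_distrib]
  exact Finset.sum_congr rfl fun i _ => by ring

theorem msfbm_local_nondeterminism_general (N : ℕ) (a H : Fin N → ℝ)
    (hH : ∀ i, H i ∈ Set.Ioo (0 : ℝ) 1)
    (Hmin : ℝ) (hHmin : IsLeast {h : ℝ | ∃ i, a i ≠ 0 ∧ H i = h} Hmin)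
    (T : ℝ) :
    ∃ c : ℝ, 0 < c ∧ ∀ s t : ℝ, 0 ≤ s → s ≤ t → t ≤ T → ∀ b : ℝ,
      c * (t - s) ^ (2 * Hmin) ≤
        mixedCov N a H t t - 2 * b * mixedCov N a H s t
          + b ^ 2 * mixedCov N a H s s := by
  obtain ⟨i₀, ha₀, rfl⟩ := hHmin.1
  choose k hk_pos hk using fun i => subCov_local_nondeterminism (hH i).1 (hH i).2
  have hterm_nonneg : ∀ s t b, 0 ≤ s → s ≤ t → ∀ i,
      0 ≤ a i ^ 2 * (subCov (H i) t t - 2 * b * subCov (H i) s t + b ^ 2 * subCov (H i) s s) :=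
    fun s t b hs hst i => mul_nonneg (sq_nonneg _) <|
      (mul_nonneg (hk_pos i).le (rpow_nonneg (sub_nonneg.2 hst) _)).trans (hk i s t b hs hst)
  refine ⟨a i₀ ^ 2 * k i₀, mul_pos (by positivity) (hk_pos i₀), fun s t hs hst _ b => ?_⟩
  rw [mixedCov_quadratic_eq_sum, mul_assoc]
  exact (mul_le_mul_of_nonneg_left (hk i₀ s t b hs hst) (sq_nonneg _)).trans
    (Finset.single_le_sum (fun i _ => hterm_nonneg s t b hs hst i) (Finset.mem_univ i₀))

/-- Local nondeterminism of the msfBm: with `H_{i₀} = min{H_i : a_i ≠ 0}` and `T > 0`,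
there is `c > 0` such that for all `0 ≤ s ≤ t ≤ T`,
`inf_b (C(t,t) − 2b C(s,t) + b² C(s,s)) ≥ c (t−s)^{2H_{i₀}}`
(the left side is the conditional variance `Var(S^H(t) | S^H(s))`). -/
theorem msfbm_local_nondeterminism (N : ℕ) (a H : Fin N → ℝ)
    (hH : ∀ i, H i ∈ Set.Ioo (0 : ℝ) 1) (ha : a ≠ 0)
    (Hmin : ℝ) (hHmin : IsLeast {h : ℝ | ∃ i, a i ≠ 0 ∧ H i = h} Hmin)
    (T : ℝ) (hT : 0 < T) :
    ∃ c : ℝ, 0 < c ∧ ∀ s t : ℝ, 0 ≤ s → s ≤ t → t ≤ T → ∀ b : ℝ,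
      c * (t - s) ^ (2 * Hmin) ≤
        mixedCov N a H t t - 2 * b * mixedCov N a H s t
          + b ^ 2 * mixedCov N a H s s :=
  msfbm_local_nondeterminism_general N a H hH Hmin hHmin T
end

section
/- Square integrability of the mixed sub-fractional kernel: let T > 0, let H = (H_1,…,H_N) ∈ (0,1)^N with H_i ∈ {1/2} ∪ (3/4, 1) for every i, and let (b_i) be real coefficients. Then the function (s,t) ↦ Σ_{i=1}^N b_i² H_i(2H_i−1) ( |t−s|^{2H_i−2} − (s+t)^{2H_i−2} ) belongs to L²([0,T]², Lebesgue). (This is the mixed second partial derivative ∂²R/∂s∂t of the covariance R(s,t) = Σ_i b_i² c_{H_i}(s,t) off the diagonal; its L² membership is the key hypothesis yielding that a Brownian motion plus the independent mixture Σ b_i ξ^{H_i} is, in its own filtration, a semimartingale equivalent in law to a Brownian motion.) -/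
/-!
The coefficient `H(2H - 1)` kills the terms with `H = 1/2`; every other term has exponent
`α = 2H - 2 > -1/2`, so the squares `|t - s|^(2α)` and `(s + t)^(2α)` have exponent `> -1`.
The shears `(s, t) ↦ (s, t ∓ s)` preserve Lebesgue measure and turn these into functions of the
second coordinate alone, which are integrable on bounded intervals.
-/

open Real Finset MeasureTheory

namespace MeasureTheory

theorem IntegrableOn.comp_snd_prod {α β E : Type*} [MeasurableSpace α] [MeasurableSpace β]
    [NormedAddCommGroup E] {μ : Measure α} {ν : Measure β} [SFinite μ] [SFinite ν] {g : β → E}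
    {s : Set α} {u : Set β} (hg : IntegrableOn g u ν) (hs : μ s ≠ ⊤) :
    IntegrableOn (fun p : α × β => g p.2) (s ×ˢ u) (μ.prod ν) := by
  have : IsFiniteMeasure (μ.restrict s) := ⟨by simpa using hs.lt_top⟩
  rw [IntegrableOn, ← Measure.prod_restrict]
  exact hg.comp_snd _

section Shear

variable {G E : Type*} [MeasurableSpace G] [AddGroup G] [MeasurableAdd₂ G] [MeasurableNeg G]
  [NormedAddCommGroup E]
  {μ ν : Measure G} [SFinite μ] [SFinite ν]

theorem IntegrableOn.comp_sub_prod [ν.IsAddRightInvariant] {g : G → E} {s t u : Set G}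
    (hg : IntegrableOn g u ν) (hs : μ s ≠ ⊤) (hst : ∀ x ∈ s, ∀ y ∈ t, y - x ∈ u) :
    IntegrableOn (fun p : G × G => g (p.2 - p.1)) (s ×ˢ t) (μ.prod ν) := by
  have hshear := (measurePreserving_prod_sub μ ν).integrableOn_comp_preimage
    (MeasurableEquiv.shearSubRight G).measurableEmbedding |>.mpr (hg.comp_snd_prod hs)
  exact hshear.mono_set fun p hp => ⟨hp.1, hst _ hp.1 _ hp.2⟩

theorem IntegrableOn.comp_add_prod [ν.IsAddLeftInvariant] {g : G → E} {s t u : Set G}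
    (hg : IntegrableOn g u ν) (hs : μ s ≠ ⊤) (hst : ∀ x ∈ s, ∀ y ∈ t, x + y ∈ u) :
    IntegrableOn (fun p : G × G => g (p.1 + p.2)) (s ×ˢ t) (μ.prod ν) := by
  have hshear := (measurePreserving_prod_add μ ν).integrableOn_comp_preimage
    (MeasurableEquiv.shearAddRight G).measurableEmbedding |>.mpr (hg.comp_snd_prod hs)
  exact hshear.mono_set fun p hp => ⟨hp.1, hst _ hp.1 _ hp.2⟩

end Shear

end MeasureTheory

theorem intervalIntegrable_abs_rpow {β : ℝ} (hβ : -1 < β) (a b : ℝ) :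
    IntervalIntegrable (fun x => |x| ^ β) volume a b := by
  have hpos : ∀ c, 0 ≤ c → IntervalIntegrable (fun x => |x| ^ β) volume 0 c := by
    intro c hc
    refine (intervalIntegral.intervalIntegrable_rpow' hβ).congr ?_
    intro x hx
    rw [Set.uIoc_of_le hc] at hx
    simp only [abs_of_pos hx.1]
  have hall : ∀ c, IntervalIntegrable (fun x => |x| ^ β) volume 0 c := by
    intro c
    rcases le_total 0 c with hc | hc
    · exact hpos c hc
    · rw [IntervalIntegrable.iff_comp_neg]
      simpa using hpos (-c) (by linarith)
  exact (hall a).symm.trans (hall b)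

theorem memLp_two_abs_sub_rpow {α : ℝ} (hα : -(1 / 2) < α) (T : ℝ) :
    MemLp (fun p : ℝ × ℝ => |p.2 - p.1| ^ α) 2
      (volume.restrict (Set.Icc 0 T ×ˢ Set.Icc 0 T)) := by
  rw [memLp_two_iff_integrable_sq (by fun_prop : Measurable _).aestronglyMeasurable]
  have hsq : ∀ x : ℝ, (|x| ^ α) ^ 2 = |x| ^ (2 * α) := fun x => by
    rw [← rpow_natCast, ← rpow_mul (abs_nonneg x), mul_comm, Nat.cast_ofNat]
  simp only [hsq]
  rw [Measure.volume_eq_prod]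
  refine ((intervalIntegrable_iff').mp
    (intervalIntegrable_abs_rpow (by linarith) (-T) T)).comp_sub_prod (by simp) ?_
  intro x hx y hy
  exact Set.mem_uIcc.mpr (Or.inl ⟨by linarith [hx.2, hy.1], by linarith [hx.1, hy.2]⟩)

theorem memLp_two_add_rpow {α : ℝ} (hα : -(1 / 2) < α) (T : ℝ) :
    MemLp (fun p : ℝ × ℝ => (p.1 + p.2) ^ α) 2
      (volume.restrict (Set.Icc 0 T ×ˢ Set.Icc 0 T)) := by
  rw [memLp_two_iff_integrable_sq (by fun_prop : Measurable _).aestronglyMeasurable]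
  have hint : IntegrableOn (fun p : ℝ × ℝ => (p.1 + p.2) ^ (2 * α))
      (Set.Icc 0 T ×ˢ Set.Icc 0 T) := by
    rw [Measure.volume_eq_prod]
    refine ((intervalIntegrable_iff').mp (intervalIntegral.intervalIntegrable_rpow'
      (a := 0) (b := T + T) (by linarith))).comp_add_prod (by simp) ?_
    intro x hx y hy
    exact Set.mem_uIcc.mpr (Or.inl ⟨by linarith [hx.1, hy.1], by linarith [hx.2, hy.2]⟩)
  -- `(x ^ α) ^ 2 = x ^ (2 * α)` needs `0 ≤ x`, which holds on the square only.
  refine (integrableOn_congr_fun (fun p hp => ?_) (measurableSet_Icc.prod measurableSet_Icc)).mp hint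
  have hp0 : 0 ≤ p.1 + p.2 := add_nonneg hp.1.1 hp.2.1
  rw [← rpow_natCast, ← rpow_mul hp0, mul_comm, Nat.cast_ofNat]

theorem msfbm_kernel_memL2_general (N : ℕ) (T : ℝ) (b H : Fin N → ℝ)
    (hH' : ∀ i, H i = 1 / 2 ∨ H i ∈ Set.Ioo (3 / 4 : ℝ) 1) :
    MemLp
      (fun p : ℝ × ℝ => ∑ i, (b i) ^ 2 * H i * (2 * H i - 1) *
        (|p.2 - p.1| ^ (2 * H i - 2) - (p.1 + p.2) ^ (2 * H i - 2)))
      2 (volume.restrict (Set.Icc (0 : ℝ) T ×ˢ Set.Icc (0 : ℝ) T)) := by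
  refine memLp_finsetSum _ fun i _ => ?_
  rcases hH' i with hhalf | hrough
  · norm_num [hhalf]
  · have hα : -(1 / 2) < 2 * H i - 2 := by linarith [hrough.1]
    exact ((memLp_two_abs_sub_rpow hα T).sub (memLp_two_add_rpow hα T)).const_mul _

/-- Square integrability of the mixed sub-fractional kernel: if each
`H_i ∈ {1/2} ∪ (3/4,1)`, then the off-diagonal mixed second derivative
`(s,t) ↦ Σ_i b_i² H_i(2H_i−1)(|t−s|^{2H_i−2} − (s+t)^{2H_i−2})`
of the covariance `R(s,t) = Σ_i b_i² c_{H_i}(s,t)` is in `L²([0,T]²)`. -/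
theorem msfbm_kernel_memL2 (N : ℕ) (T : ℝ) (hT : 0 < T) (b H : Fin N → ℝ)
    (hH : ∀ i, H i ∈ Set.Ioo (0 : ℝ) 1)
    (hH' : ∀ i, H i = 1 / 2 ∨ H i ∈ Set.Ioo (3 / 4 : ℝ) 1) :
    MemLp
      (fun p : ℝ × ℝ => ∑ i, (b i) ^ 2 * H i * (2 * H i - 1) *
        (|p.2 - p.1| ^ (2 * H i - 2) - (p.1 + p.2) ^ (2 * H i - 2)))
      2 (volume.restrict (Set.Icc (0 : ℝ) T ×ˢ Set.Icc (0 : ℝ) T)) :=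
  msfbm_kernel_memL2_general N T b H hH'
end
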